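/- arXiv:2009.13713 — 6 statements merged into one kernel-verified Lean document; each statement's English description precedes it below -/
import Mathlib

section
/- Let (X, B, μ) be a σ-finite measure space and f : X → X a bijective bimeasurable nonsingular transformation such that μ(f⁻¹(B)) ≤ c·μ(B) for all measurable B and some c > 0. If f satisfies the Summability Condition (SC), then f is dissipative, i.e., there exists a measurable wandering set W (the sets fⁿ(W), n ∈ ℤ, are pairwise disjoint) with X = ⋃_{n∈ℤ} fⁿ(W), up to a μ-null set. -/
/-!
Write `e` for `f` viewed as a permutation. For a set `A`, the points of `A` whose forward orbit
never returns to `A` form a wandering set, and its orbit contains every point of `A` whose orbit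
visits `A` only finitely often (move to the last visit). By (SC) and σ-finiteness, countably many
sets `Aᵢ` with `∑ₙ μ(eⁿ Aᵢ) < ∞` cover `X` up to a null set, and by Borel–Cantelli almost every
orbit visits each `Aᵢ` only finitely often. Removing from the last-visit set of `Aᵢ` the orbits
of those of `A₀, …, Aᵢ₋₁` keeps the union wandering without changing the union of the orbits.
-/

open MeasureTheory Set Filter
open scoped ENNReal NNReal

/-- The image of a set under the `n`-th power (`n ∈ ℤ`) of a bijection `f`. -/
def zimg {X : Type*} (f : X → X) (n : ℤ) (B : Set X) : Set X :=
  if 0 ≤ n then f^[n.toNat] '' B else f^[(-n).toNat] ⁻¹' B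

/-- `W` is a wandering set for `f`: the sets `fⁿ(W)`, `n ∈ ℤ`, are pairwise disjoint. -/
def Wandering {X : Type*} (f : X → X) (W : Set X) : Prop :=
  Pairwise fun m n : ℤ => Disjoint (zimg f m W) (zimg f n W)

/-- `W` generates `X`: `X = ⋃_{n ∈ ℤ} fⁿ(W)`. -/
def GeneratedBy {X : Type*} (f : X → X) (W : Set X) : Prop :=
  (⋃ n : ℤ, zimg f n W) = Set.univ

/-- The Summability Condition (SC). -/
def SCcond {X : Type*} [MeasurableSpace X] (μ : Measure X) (f : X → X) : Prop :=
  ∀ ε : ℝ≥0∞, 0 < ε → ∀ B : Set X, MeasurableSet B → μ B < ⊤ →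
    ∃ B' : Set X, B' ⊆ B ∧ MeasurableSet B' ∧ μ (B \ B') < ε ∧
      ∑' n : ℤ, μ (zimg f n B') ≠ ⊤

/-- A measurable system: `μ` σ-finite with `μ(X) > 0`, `f` bijective, bimeasurable,
nonsingular, and `μ(f⁻¹(B)) ≤ c·μ(B)` with `0 < c < ∞`. -/
def MeasSystem {X : Type*} [MeasurableSpace X] (μ : Measure X) (f : X → X) (c : ℝ≥0∞) : Prop :=
  SigmaFinite μ ∧ 0 < μ Set.univ ∧ Function.Bijective f ∧ Measurable f ∧
  (∀ B : Set X, MeasurableSet B → MeasurableSet (f '' B)) ∧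
  (∀ B : Set X, MeasurableSet B → (μ (f ⁻¹' B) = 0 ↔ μ B = 0)) ∧
  0 < c ∧ c ≠ ⊤ ∧ (∀ B : Set X, MeasurableSet B → μ (f ⁻¹' B) ≤ c * μ B)

/-- `f` is dissipative: there is a generating wandering set. -/
def Dissipative {X : Type*} [MeasurableSpace X] (f : X → X) : Prop :=
  ∃ W : Set X, MeasurableSet W ∧ Wandering f W ∧ GeneratedBy f W

/-- A set of natural numbers has positive lower density. -/
def PosLowerDensity (A : Set ℕ) : Prop :=
  0 < Filter.liminf (fun N : ℕ => ((A ∩ Set.Icc 1 N).ncard : ℝ) / N) Filter.atTop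

/-- `x` is a recurrent point of `f`. -/
def Recurrent {X : Type*} [TopologicalSpace X] (f : X → X) (x : X) : Prop :=
  ∀ U : Set X, IsOpen U → x ∈ U → ∃ n : ℕ, 1 ≤ n ∧ f^[n] x ∈ U

/-- A continuous linear operator is frequently hypercyclic. -/
def FreqHC {E : Type*} [NormedAddCommGroup E] [NormedSpace ℝ E] (T : E →L[ℝ] E) : Prop :=
  ∃ φ : E, ∀ U : Set E, IsOpen U → U.Nonempty → PosLowerDensity {n : ℕ | (T ^ n) φ ∈ U}

/-- `d(W) = ‖dμ/dν |_W‖_∞⁻¹`, with the convention `1/∞ = 0`. -/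
noncomputable def dSeq {X : Type*} [MeasurableSpace X] (μ ν : Measure X) (W : Set X) : ℝ≥0∞ :=
  (essSup (μ.rnDeriv ν) (μ.restrict W))⁻¹


namespace Equiv.Perm

variable {X : Type*} (e : Equiv.Perm X)

def IsWandering (W : Set X) : Prop :=
  ∀ x ∈ W, ∀ n : ℤ, (e ^ n) x ∈ W → n = 0

def saturation (V : Set X) : Set X :=
  {x | ∃ n : ℤ, (e ^ n) x ∈ V}

def lastVisits (A : Set X) : Set X :=
  {x | x ∈ A ∧ ∀ n : ℤ, 0 < n → (e ^ n) x ∉ A}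

def orbitDisjointed (V : ℕ → Set X) : Set X :=
  ⋃ i, V i \ ⋃ j < i, saturation e (V j)

lemma zpow_apply_zpow_apply (m n : ℤ) (x : X) : (e ^ m) ((e ^ n) x) = (e ^ (m + n)) x := by
  rw [← mul_apply, ← zpow_add]

lemma subset_saturation (V : Set X) : V ⊆ saturation e V :=
  fun x hx => ⟨0, by simpa using hx⟩

lemma zpow_apply_mem_saturation_iff {V : Set X} {x : X} (n : ℤ) :
    (e ^ n) x ∈ saturation e V ↔ x ∈ saturation e V := by
  refine ⟨fun ⟨m, hm⟩ => ⟨m + n, ?_⟩, fun ⟨m, hm⟩ => ⟨m - n, ?_⟩⟩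
  · rwa [zpow_apply_zpow_apply] at hm
  · rwa [zpow_apply_zpow_apply, sub_add_cancel]

lemma isWandering_lastVisits (A : Set X) : IsWandering e (lastVisits e A) := by
  intro x hx n hn
  rcases lt_trichotomy n 0 with hneg | rfl | hpos
  · have h := hn.2 (-n) (neg_pos.2 hneg)
    rw [zpow_neg, inv_def, symm_apply_apply] at h
    exact absurd hx.1 h
  · rfl
  · exact absurd hn.1 (hx.2 n hpos)

lemma mem_saturation_lastVisits {A : Set X} {x : X} (hx : x ∈ A)
    (hfin : {n : ℤ | (e ^ n) x ∈ A}.Finite) : x ∈ saturation e (lastVisits e A) := by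
  obtain ⟨m, hm, hmax⟩ := exists_max_image _ id hfin ⟨0, by simpa using hx⟩
  refine ⟨m, hm, fun n hn hmem => ?_⟩
  rw [zpow_apply_zpow_apply] at hmem
  have : n + m ≤ m := hmax _ hmem
  omega

lemma isWandering_orbitDisjointed {V : ℕ → Set X} (hV : ∀ i, IsWandering e (V i)) :
    IsWandering e (orbitDisjointed e V) := by
  intro x hx n hn
  simp only [orbitDisjointed, mem_iUnion, Set.mem_sdiff, not_exists] at hx hn
  obtain ⟨i, hxi, hxS⟩ := hx
  obtain ⟨k, hyk, hyS⟩ := hn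
  rcases lt_trichotomy i k with hik | rfl | hki
  · exact absurd ((zpow_apply_mem_saturation_iff e n).2 (subset_saturation e _ hxi)) (hyS i hik)
  · exact hV i x hxi n hyk
  · exact absurd ((zpow_apply_mem_saturation_iff e n).1 (subset_saturation e _ hyk)) (hxS k hki)

lemma saturation_orbitDisjointed (V : ℕ → Set X) :
    saturation e (orbitDisjointed e V) = ⋃ i, saturation e (V i) := by
  classical
  ext x
  simp only [mem_iUnion]
  constructor
  · rintro ⟨n, hn⟩
    obtain ⟨i, hi, -⟩ := mem_iUnion.1 hn
    exact ⟨i, n, hi⟩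
  · intro hex
    obtain ⟨n, hn⟩ := Nat.find_spec hex
    refine ⟨n, mem_iUnion.2 ⟨Nat.find hex, hn, ?_⟩⟩
    simp only [mem_iUnion, not_exists]
    intro j hj hjS
    exact Nat.find_min hex hj ((zpow_apply_mem_saturation_iff e n).1 hjS)

section Measurable

variable [MeasurableSpace X] {e}

lemma measurable_zpow (he : Measurable e) (he' : Measurable e.symm) (n : ℤ) :
    Measurable ⇑(e ^ n) := by
  induction n using Int.induction_on with
  | zero => exact measurable_id
  | succ n ih => rw [zpow_add_one, coe_mul]; exact ih.comp he
  | pred n ih => rw [zpow_sub_one, coe_mul]; exact ih.comp he'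

lemma measurableSet_saturation (hm : ∀ n : ℤ, Measurable ⇑(e ^ n))
    {V : Set X} (hV : MeasurableSet V) : MeasurableSet (saturation e V) := by
  have : saturation e V = ⋃ n : ℤ, (e ^ n) ⁻¹' V := by ext; simp [saturation]
  exact this ▸ .iUnion fun n => hm n hV

lemma measurableSet_lastVisits (hm : ∀ n : ℤ, Measurable ⇑(e ^ n))
    {A : Set X} (hA : MeasurableSet A) : MeasurableSet (lastVisits e A) := by
  have : lastVisits e A = A ∩ ⋂ n : ℤ, ⋂ (_ : 0 < n), (e ^ n) ⁻¹' Aᶜ := by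
    ext; simp [lastVisits]
  exact this ▸ hA.inter (.iInter fun n => .iInter fun _ => hm n hA.compl)

lemma measurableSet_orbitDisjointed (hm : ∀ n : ℤ, Measurable ⇑(e ^ n))
    {V : ℕ → Set X} (hV : ∀ i, MeasurableSet (V i)) :
    MeasurableSet (orbitDisjointed e V) :=
  .iUnion fun i => (hV i).diff (.biUnion (to_countable _)
    fun j _ => measurableSet_saturation hm (hV j))

end Measurable

lemma ae_finite_setOf_zpow_apply_mem [MeasurableSpace X] {μ : Measure X} {A : Set X}
    (h : ∑' n : ℤ, μ ((e ^ n) '' A) ≠ ⊤) : ∀ᵐ x ∂μ, {n : ℤ | (e ^ n) x ∈ A}.Finite := by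
  filter_upwards [ae_finite_setOfPred_mem h] with x hx
  have : {n : ℤ | (e ^ n) x ∈ A} = Neg.neg ⁻¹' {n : ℤ | x ∈ (e ^ n) '' A} := by
    ext n
    simp [mem_image_equiv, ← inv_def, zpow_neg]
  exact this ▸ hx.preimage neg_injective.injOn

end Equiv.Perm

section Covering

variable {X : Type*} [MeasurableSpace X] {μ : Measure X}

lemma exists_seq_ae_cover_of_forall_approx [SigmaFinite μ] (P : Set X → Prop)
    (h : ∀ ε : ℝ≥0∞, 0 < ε → ∀ B : Set X, MeasurableSet B → μ B < ⊤ →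
      ∃ B' : Set X, B' ⊆ B ∧ MeasurableSet B' ∧ μ (B \ B') < ε ∧ P B') :
    ∃ A : ℕ → Set X, (∀ i, MeasurableSet (A i) ∧ P (A i)) ∧ ∀ᵐ x ∂μ, ∃ i, x ∈ A i := by
  choose B hBsub hBm hBsmall hBP using fun (k j : ℕ) =>
    h (j : ℝ≥0∞)⁻¹ (ENNReal.inv_pos.2 (ENNReal.natCast_ne_top j)) (spanningSets μ k)
      (measurableSet_spanningSets μ k) (measure_spanningSets_lt_top μ k)
  have hnull : ∀ k, μ (spanningSets μ k \ ⋃ j, B k j) = 0 := fun k => by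
    by_contra hpos
    obtain ⟨j, hj⟩ := ENNReal.exists_inv_nat_lt hpos
    exact (hj.trans_le (measure_mono (sdiff_subset_sdiff_right (subset_iUnion _ j)))).not_gt
      (hBsmall k j)
  refine ⟨fun i => B i.unpair.1 i.unpair.2, fun i => ⟨hBm _ _, hBP _ _⟩, ?_⟩
  filter_upwards [ae_all_iff.2 fun k => measure_eq_zero_iff_ae_notMem.1 (hnull k)] with x hx
  obtain ⟨k, hk⟩ := mem_iUnion.1 (iUnion_spanningSets μ ▸ mem_univ x)
  obtain ⟨j, hj⟩ := mem_iUnion.1 (not_not.1 fun h => hx k ⟨hk, h⟩)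
  exact ⟨Nat.pair k j, by simpa using hj⟩

end Covering

section Zimg

variable {X : Type*} {f : X → X}

lemma zimg_eq_image_zpow (hf : Function.Bijective f) (n : ℤ) (B : Set X) :
    zimg f n B = ⇑(Equiv.ofBijective f hf ^ n) '' B := by
  have hpow : ∀ k : ℕ, ⇑(Equiv.ofBijective f hf ^ k) = f^[k] := fun k => by
    induction k with
    | zero => rfl
    | succ k ih => rw [pow_succ', Equiv.Perm.coe_mul, ih, Function.iterate_succ']; rfl
  obtain ⟨k, rfl | rfl⟩ := n.eq_nat_or_neg
  · simp [zimg, hpow]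
  · rcases k with _ | k
    · simp [zimg]
    · rw [zimg, if_neg (by omega), zpow_neg, zpow_natCast, Equiv.Perm.inv_def,
        Equiv.image_eq_preimage_symm, Equiv.symm_symm, hpow]
      simp

lemma iUnion_zimg_eq_saturation (hf : Function.Bijective f) (W : Set X) :
    ⋃ n : ℤ, zimg f n W = Equiv.Perm.saturation (Equiv.ofBijective f hf) W := by
  ext x
  simp only [zimg_eq_image_zpow hf, mem_iUnion, mem_image_equiv, ← Equiv.Perm.inv_def,
    ← zpow_neg]
  exact ⟨fun ⟨n, h⟩ => ⟨-n, h⟩, fun ⟨n, h⟩ => ⟨-n, by rwa [neg_neg]⟩⟩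

lemma wandering_of_isWandering (hf : Function.Bijective f) {W : Set X}
    (hW : Equiv.Perm.IsWandering (Equiv.ofBijective f hf) W) : Wandering f W := by
  intro m n hmn
  simp only [zimg_eq_image_zpow hf, disjoint_left, mem_image]
  rintro _ ⟨x, hx, rfl⟩ ⟨y, hy, hyx⟩
  have hxy : (Equiv.ofBijective f hf ^ (-n + m)) x = y := by
    rw [← Equiv.Perm.zpow_apply_zpow_apply, ← hyx, zpow_neg, Equiv.Perm.inv_def,
      Equiv.symm_apply_apply]
  have hzero := hW x hx _ (hxy ▸ hy)
  omega

end Zimg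

/-- If a measurable system satisfies Condition (SC), then `f` is dissipative
(up to a `μ`-null set). -/
theorem stmt_0 {X : Type*} [MeasurableSpace X] (μ : Measure X) (f : X → X) (c : ℝ≥0∞)
    (hsys : MeasSystem μ f c) (hSC : SCcond μ f) :
    ∃ W : Set X, MeasurableSet W ∧ Wandering f W ∧
      μ (Set.univ \ ⋃ n : ℤ, zimg f n W) = 0 := by
  obtain ⟨hσ, -, hbij, hf, himg, -⟩ := hsys
  set e : Equiv.Perm X := Equiv.ofBijective f hbij
  have he : ∀ n : ℤ, Measurable ⇑(e ^ n) := Equiv.Perm.measurable_zpow hf fun B hB => by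
    rw [← Equiv.image_eq_preimage_symm]
    exact himg B hB
  obtain ⟨A, hA, hcover⟩ := exists_seq_ae_cover_of_forall_approx (μ := μ)
    (fun B => ∑' n : ℤ, μ (zimg f n B) ≠ ⊤) hSC
  have hfin : ∀ᵐ x ∂μ, ∀ i, {n : ℤ | (e ^ n) x ∈ A i}.Finite := ae_all_iff.2 fun i =>
    e.ae_finite_setOf_zpow_apply_mem (by simpa only [zimg_eq_image_zpow hbij] using (hA i).2)
  refine ⟨e.orbitDisjointed fun i => e.lastVisits (A i),
    Equiv.Perm.measurableSet_orbitDisjointed he fun i =>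
      Equiv.Perm.measurableSet_lastVisits he (hA i).1,
    wandering_of_isWandering hbij (e.isWandering_orbitDisjointed fun i =>
      e.isWandering_lastVisits (A i)), ?_⟩
  rw [iUnion_zimg_eq_saturation hbij, Equiv.Perm.saturation_orbitDisjointed,
    ← compl_eq_univ_sdiff, ← mem_ae_iff]
  filter_upwards [hcover, hfin] with x ⟨i, hxi⟩ hx
  exact mem_iUnion.2 ⟨i, e.mem_saturation_lastVisits hxi (hx i)⟩
end

section
/- Let (X, B, μ, f) be a measurable system with μ(X) < ∞. If f is dissipative, then f satisfies the Summability Condition (SC). -/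
open MeasureTheory Set Filter
open scoped ENNReal NNReal

/-! Cover `B` by the pieces `B ∩ fⁿ(W)`, `n ∈ ℤ`. Finitely many of them exhaust `B` up to measure
`ε`. Each piece lies in the wandering set `fⁿ(W)`, so its images are pairwise disjoint and their
total mass is at most `μ X < ∞`; a finite union of pieces therefore has a summable orbit. -/

section Orbits

variable {X : Type*} {f : X → X}

lemma zimg_mono (n : ℤ) : Monotone (zimg f n) := by
  intro A B h
  unfold zimg
  split_ifs
  · exact image_mono h
  · exact preimage_mono h

lemma zimg_iUnion {ι : Sort*} (n : ℤ) (A : ι → Set X) :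
    zimg f n (⋃ i, A i) = ⋃ i, zimg f n (A i) := by
  unfold zimg
  split_ifs
  · exact image_iUnion
  · exact preimage_iUnion

lemma zimg_zimg (hf : Function.Bijective f) (k n : ℤ) (B : Set X) :
    zimg f k (zimg f n B) = zimg f (k + n) B := by
  simp only [zimg_eq_image_zpow hf, zpow_add, Equiv.Perm.coe_mul, image_comp]

lemma Wandering.mono {W A : Set X} (hW : Wandering f W) (hA : A ⊆ W) : Wandering f A :=
  fun m n hmn => (hW hmn).mono (zimg_mono m hA) (zimg_mono n hA)

lemma wandering_zimg (hf : Function.Bijective f) {W : Set X} (hW : Wandering f W) (n : ℤ) :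
    Wandering f (zimg f n W) := by
  intro k l hkl
  rw [zimg_zimg hf, zimg_zimg hf]
  exact hW (by omega)

variable [MeasurableSpace X]

lemma measurableSet_zimg (hf : Measurable f)
    (hf_image : ∀ B : Set X, MeasurableSet B → MeasurableSet (f '' B)) (n : ℤ)
    {B : Set X} (hB : MeasurableSet B) : MeasurableSet (zimg f n B) := by
  unfold zimg
  split_ifs
  · induction n.toNat with
    | zero => simpa using hB
    | succ k ih => rw [Function.iterate_succ', image_comp]; exact hf_image _ ih
  · exact hf.iterate _ hB

lemma Wandering.tsum_measure_zimg_le (μ : Measure X) {A : Set X} (hA : Wandering f A)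
    (hA_meas : ∀ k, MeasurableSet (zimg f k A)) : ∑' k, μ (zimg f k A) ≤ μ univ := by
  rw [← measure_iUnion hA hA_meas]
  exact measure_mono (subset_univ _)

lemma tsum_measure_zimg_biUnion_le (μ : Measure X) {ι : Type*} (s : Finset ι) (A : ι → Set X) :
    ∑' k, μ (zimg f k (⋃ i ∈ s, A i)) ≤ ∑ i ∈ s, ∑' k, μ (zimg f k (A i)) :=
  calc ∑' k, μ (zimg f k (⋃ i ∈ s, A i))
      = ∑' k, μ (⋃ i ∈ s, zimg f k (A i)) := by simp only [zimg_iUnion]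
    _ ≤ ∑' k, ∑ i ∈ s, μ (zimg f k (A i)) :=
      ENNReal.tsum_le_tsum fun k => measure_biUnion_finset_le _ _
    _ = ∑ i ∈ s, ∑' k, μ (zimg f k (A i)) :=
      Summable.tsum_finsetSum fun _ _ => ENNReal.summable

end Orbits

lemma exists_finset_measure_sdiff_biUnion_lt {X ι : Type*} [MeasurableSpace X] [Countable ι]
    (μ : Measure X) {A : ι → Set X} (hA : ∀ i, MeasurableSet (A i)) {B : Set X}
    (hB : MeasurableSet B) (hB_fin : μ B ≠ ⊤) (hB_cover : B ⊆ ⋃ i, A i) {ε : ℝ≥0∞}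
    (hε : 0 < ε) : ∃ s : Finset ι, μ (B \ ⋃ i ∈ s, A i) < ε := by
  set S : Finset ι → Set X := fun s => B ∩ ⋃ i ∈ s, A i
  have hmono : Monotone S :=
    fun s t hst => inter_subset_inter_right _ (biUnion_subset_biUnion_left hst)
  have hunion : (⋃ s, S s) = B := by
    rw [← inter_iUnion, ← iUnion_eq_iUnion_finset, inter_eq_left.2 hB_cover]
  have htendsto : Tendsto (fun s => μ (S s) + ε) atTop (nhds (μ B + ε)) := by
    simpa only [hunion, Function.comp_def] using
      (tendsto_measure_iUnion_atTop (μ := μ) hmono).add_const ε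
  obtain ⟨s, hs⟩ :=
    (htendsto.eventually (lt_mem_nhds (ENNReal.lt_add_right hB_fin hε.ne'))).exists
  refine ⟨s, ?_⟩
  rw [← sdiff_inter_self_eq_sdiff, inter_comm]
  exact measure_sdiff_lt_of_lt_add
    (hB.inter (Finset.measurableSet_biUnion _ fun i _ => hA i)).nullMeasurableSet
    inter_subset_left (measure_ne_top_of_subset inter_subset_left hB_fin) hs

/-- In a measurable system of finite measure, if `f` is dissipative then `f`
satisfies Condition (SC). -/
theorem stmt_1 {X : Type*} [MeasurableSpace X] (μ : Measure X) (f : X → X) (c : ℝ≥0∞)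
    (hsys : MeasSystem μ f c) (hfin : μ Set.univ ≠ ⊤) (hdiss : Dissipative f) :
    SCcond μ f := by
  obtain ⟨-, -, hf, hf_meas, hf_image, -, -, -, -⟩ := hsys
  obtain ⟨W, hW, hW_wand, hW_gen⟩ := hdiss
  have hzimg : ∀ n {A}, MeasurableSet A → MeasurableSet (zimg f n A) :=
    fun n _ hA => measurableSet_zimg hf_meas hf_image n hA
  intro ε hε B hB hB_fin
  obtain ⟨s, hs⟩ := exists_finset_measure_sdiff_biUnion_lt μ (fun n => hzimg n hW) hB
    hB_fin.ne (hW_gen ▸ subset_univ B) hε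
  refine ⟨⋃ n ∈ s, B ∩ zimg f n W, iUnion₂_subset fun _ _ => inter_subset_left,
    Finset.measurableSet_biUnion _ fun n _ => hB.inter (hzimg n hW), ?_, ?_⟩
  · rwa [← inter_iUnion₂, sdiff_self_inter]
  have horbit : ∀ n, ∑' k, μ (zimg f k (B ∩ zimg f n W)) ≤ μ univ := fun n =>
    ((wandering_zimg hf hW_wand n).mono inter_subset_right).tsum_measure_zimg_le μ
      fun k => hzimg k (hB.inter (hzimg n hW))
  refine ne_top_of_le_ne_top ?_ (tsum_measure_zimg_biUnion_le μ s _)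
  exact ENNReal.sum_ne_top.2 fun n _ => ne_top_of_le_ne_top hfin (horbit n)
end

section
/- Let (X, B, μ, f) be a measurable system with constant c > 0 (i.e., μ(f⁻¹(B)) ≤ c μ(B) for all measurable B), and let W be a measurable set with 0 < μ(W) < ∞. Define d_n(W) = ‖ dμ/d(μ∘fⁿ) restricted to W ‖_∞^{-1} (with 1/∞ = 0). Then d_{n+1}(W) ≥ c^{-1} d_n(W) for all n ∈ ℤ. -/
open MeasureTheory Set Filter
open scoped ENNReal NNReal

/-! Since `fⁿ(B) = f⁻¹(fⁿ⁺¹(B))`, the constant `c` gives `μ∘fⁿ ≤ c • μ∘fⁿ⁺¹` as measures, hence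
`d(μ∘fⁿ)/d(μ∘fⁿ⁺¹) ≤ c` a.e., and by the chain rule `dμ/d(μ∘fⁿ⁺¹) ≤ c · dμ/d(μ∘fⁿ)` μ-a.e.;
taking essential suprema over `W` and inverting gives the inequality. The measures `μ∘fⁿ` are
the images of `μ` under the powers of `f⁻¹` in the group of bimeasurable permutations preserving
`μ`-null sets, which makes them σ-finite and equivalent to `μ`. -/

namespace MeasureTheory.Measure

variable {α β : Type*} [MeasurableSpace α] [MeasurableSpace β] {μ ν κ : Measure α} {c : ℝ≥0∞}

lemma map_comp_le_smul_map {f : α → α} {g : α → β} (hg : Measurable g) (hf : Measurable f)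
    (h : μ.map f ≤ c • μ) : μ.map (g ∘ f) ≤ c • μ.map g := by
  rw [← map_map hg hf, ← Measure.map_smul]
  exact map_mono h hg

lemma rnDeriv_le_of_le_smul [SigmaFinite κ] (h : ν ≤ c • κ) : ν.rnDeriv κ ≤ᵐ[κ] fun _ => c := by
  refine ae_le_of_forall_setLIntegral_le_of_sigmaFinite (ν.measurable_rnDeriv κ) fun s _ _ => ?_
  rw [setLIntegral_const]
  exact (setLIntegral_rnDeriv_le s).trans (h s)

lemma rnDeriv_le_mul_rnDeriv_of_le_smul [SigmaFinite μ] [SigmaFinite ν] [SigmaFinite κ]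
    (hμν : μ ≪ ν) (h : ν ≤ c • κ) : μ.rnDeriv κ ≤ᵐ[μ] fun x => c * μ.rnDeriv ν x := by
  have hμκ : μ ≪ κ :=
    hμν.trans ((absolutelyContinuous_of_le h).trans (AbsolutelyContinuous.rfl.smul_left c))
  refine hμκ.ae_le ?_
  filter_upwards [rnDeriv_mul_rnDeriv (κ := κ) hμν, rnDeriv_le_of_le_smul h] with x hchain hle
  rw [← hchain, Pi.mul_apply, mul_comm]
  exact mul_le_mul_left hle _

lemma essSup_rnDeriv_le_mul_of_le_smul [SigmaFinite μ] [SigmaFinite ν] [SigmaFinite κ]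
    (hμν : μ ≪ ν) (h : ν ≤ c • κ) (W : Set α) :
    essSup (μ.rnDeriv κ) (μ.restrict W) ≤ c * essSup (μ.rnDeriv ν) (μ.restrict W) := by
  rw [← ENNReal.essSup_const_mul]
  exact essSup_mono_ae (ae_restrict_of_ae (rnDeriv_le_mul_rnDeriv_of_le_smul hμν h))

end MeasureTheory.Measure

lemma inv_mul_dSeq_le_dSeq_of_le_smul {X : Type*} [MeasurableSpace X] {μ ν κ : Measure X}
    [SigmaFinite μ] [SigmaFinite ν] [SigmaFinite κ] {c : ℝ≥0∞} (hc₀ : c ≠ 0) (hc : c ≠ ∞)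
    (hμν : μ ≪ ν) (h : ν ≤ c • κ) (W : Set X) : c⁻¹ * dSeq μ ν W ≤ dSeq μ κ W := by
  rw [dSeq, dSeq, ← ENNReal.mul_inv (Or.inl hc₀) (Or.inl hc)]
  exact ENNReal.inv_le_inv' (Measure.essSup_rnDeriv_le_mul_of_le_smul hμν h W)

namespace Equiv.Perm

variable {α : Type*} [MeasurableSpace α] {μ : Measure α}

def nonsingularSubgroup (μ : Measure α) : Subgroup (Perm α) where
  carrier := {p | Measure.QuasiMeasurePreserving p μ μ ∧ Measure.QuasiMeasurePreserving p.symm μ μ}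
  mul_mem' hp hq := ⟨hp.1.comp hq.1, hq.2.comp hp.2⟩
  one_mem' := ⟨.id μ, .id μ⟩
  inv_mem' hp := ⟨hp.2, hp.1⟩

lemma ofBijective_mem_nonsingularSubgroup {f : α → α} (hbij : Function.Bijective f)
    (hm : Measurable f) (himg : ∀ B : Set α, MeasurableSet B → MeasurableSet (f '' B))
    (hnull : ∀ B : Set α, MeasurableSet B → (μ (f ⁻¹' B) = 0 ↔ μ B = 0)) :
    Equiv.ofBijective f hbij ∈ nonsingularSubgroup μ := by
  have hsymm_preimage (B : Set α) : (Equiv.ofBijective f hbij).symm ⁻¹' B = f '' B :=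
    ((Equiv.ofBijective f hbij).image_eq_preimage_symm B).symm
  have hsymm_meas : Measurable (Equiv.ofBijective f hbij).symm := fun B hB =>
    hsymm_preimage B ▸ himg B hB
  refine ⟨⟨hm, ?_⟩, ⟨hsymm_meas, ?_⟩⟩
  · refine Measure.AbsolutelyContinuous.mk fun B hB hB₀ => ?_
    change μ.map f B = 0
    rwa [Measure.map_apply hm hB, hnull B hB]
  · refine Measure.AbsolutelyContinuous.mk fun B hB hB₀ => ?_
    rw [Measure.map_apply hsymm_meas hB, hsymm_preimage, ← hnull _ (himg B hB),
      Set.preimage_image_eq _ hbij.1]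
    exact hB₀

variable {p : Perm α}

lemma sigmaFinite_map_of_mem_nonsingularSubgroup [SigmaFinite μ]
    (hp : p ∈ nonsingularSubgroup μ) : SigmaFinite (μ.map p) :=
  (⟨p, hp.1.measurable, hp.2.measurable⟩ : α ≃ᵐ α).sigmaFinite_map

lemma absolutelyContinuous_map_of_mem_nonsingularSubgroup (hp : p ∈ nonsingularSubgroup μ) :
    μ ≪ μ.map p := by
  refine Measure.AbsolutelyContinuous.mk fun s hs hs₀ => ?_
  rw [Measure.map_apply hp.1.measurable hs] at hs₀
  simpa [← Set.preimage_comp] using hp.2.preimage_null hs₀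

end Equiv.Perm

lemma zimg_eq_preimage_zpow {X : Type*} {f : X → X} (hf : Function.Bijective f) (n : ℤ)
    (B : Set X) : zimg f n B = ⇑(Equiv.ofBijective f hf ^ (-n)) ⁻¹' B := by
  unfold zimg
  split_ifs with hn
  · obtain ⟨k, rfl⟩ := Int.eq_ofNat_of_zero_le hn
    rw [zpow_neg, zpow_natCast, Equiv.Perm.inv_def, ← Equiv.image_eq_preimage_symm,
      Equiv.Perm.coe_pow]
    rfl
  · obtain ⟨k, hk⟩ := Int.eq_ofNat_of_zero_le (by omega : 0 ≤ -n)
    rw [hk, zpow_natCast, Equiv.Perm.coe_pow]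
    rfl

theorem stmt_4_general {X : Type*} [MeasurableSpace X] (μ : Measure X) (f : X → X) (c : ℝ≥0∞)
    (hsys : MeasSystem μ f c) (W : Set X)
    (ν : ℤ → Measure X) (hν : ∀ (n : ℤ) (B : Set X), MeasurableSet B → ν n B = μ (zimg f n B)) :
    ∀ n : ℤ, c⁻¹ * dSeq μ (ν n) W ≤ dSeq μ (ν (n + 1)) W := by
  obtain ⟨hσ, -, hbij, hm, himg, hnull, hc₀, hc, hcμ⟩ := hsys
  set e := Equiv.ofBijective f hbij
  have hmem (n : ℤ) : e ^ (-n) ∈ Equiv.Perm.nonsingularSubgroup μ :=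
    Subgroup.zpow_mem _ (Equiv.Perm.ofBijective_mem_nonsingularSubgroup hbij hm himg hnull) _
  have hν_map (n : ℤ) : ν n = μ.map ⇑(e ^ (-n)) := Measure.ext fun B hB => by
    rw [hν n B hB, Measure.map_apply (hmem n).1.measurable hB, zimg_eq_preimage_zpow hbij]
  have hν_sigmaFinite (n : ℤ) : SigmaFinite (ν n) :=
    hν_map n ▸ Equiv.Perm.sigmaFinite_map_of_mem_nonsingularSubgroup (hmem n)
  have hmap_f : μ.map f ≤ c • μ := Measure.le_iff.2 fun B hB => by
    rw [Measure.map_apply hm hB, Measure.smul_apply, smul_eq_mul]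
    exact hcμ B hB
  intro n
  have hstep : ν n ≤ c • ν (n + 1) := by
    have he_pow : ⇑(e ^ (-n)) = ⇑(e ^ (-(n + 1))) ∘ ⇑e := by
      rw [← Equiv.Perm.coe_mul, ← zpow_add_one, neg_add, neg_add_cancel_right]
    rw [hν_map, hν_map, he_pow]
    exact Measure.map_comp_le_smul_map (hmem (n + 1)).1.measurable hm hmap_f
  exact inv_mul_dSeq_le_dSeq_of_le_smul hc₀.ne' hc
    (hν_map n ▸ Equiv.Perm.absolutelyContinuous_map_of_mem_nonsingularSubgroup (hmem n)) hstep W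

/-- For a measurable system with constant `c` and `W` of finite positive
measure, the quantities `d_n(W) = ‖dμ/d(μ∘fⁿ)|_W‖_∞⁻¹` satisfy `d_{n+1}(W) ≥ c⁻¹ d_n(W)`. -/
theorem stmt_4 {X : Type*} [MeasurableSpace X] (μ : Measure X) (f : X → X) (c : ℝ≥0∞)
    (hsys : MeasSystem μ f c) (W : Set X) (hWm : MeasurableSet W)
    (hW0 : 0 < μ W) (hWfin : μ W ≠ ⊤)
    (ν : ℤ → Measure X) (hν : ∀ (n : ℤ) (B : Set X), MeasurableSet B → ν n B = μ (zimg f n B)) :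
    ∀ n : ℤ, c⁻¹ * dSeq μ (ν n) W ≤ dSeq μ (ν (n + 1)) W :=
  stmt_4_general μ f c hsys W ν hν
end

section
/- Let (α_n)_{n∈ℤ} be a sequence of non-negative real numbers such that there exists C > 0 with either α_{n+1} ≥ C α_n for all n ∈ ℤ, or α_n ≥ C α_{n+1} for all n ∈ ℤ. Suppose there exists a set A ⊆ ℤ of positive upper density such that the sums β_n = ∑_{m∈A} α_{m−n} are uniformly bounded for n ∈ A. Then ∑_{n∈ℤ} α_n < ∞. -/
open MeasureTheory Set Filter
open scoped ENNReal NNReal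

/-! Let `A_N = A ∩ [-N, N]` and normalise the correlation counts `#(A_N ∩ (A_N - k))` by `2N + 1`.
Along an ultrafilter concentrated on the `N` where `A_N` has density `> δ` they converge to some
`σ(k)`. The bound on `β` gives `∑ σ(k) α_k ≤ M σ(0)`, and Cauchy–Schwarz gives
`∑_{x,y ∈ E} σ(y - x) ≥ |E|² δ²` for every finite `E`, so among any `⌈2/δ²⌉ + 1` integers two
differ by an element of the symmetric set `D = {σ ≥ δ²/2}`. Hence `D` has bounded gaps, `α` is
summable on `D`, and the growth condition bounds every `α_k` by a multiple of some `α_d`, `d ∈ D`,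
at bounded distance from `k`. -/

section DiffCount

open Finset

def diffCount (T : Finset ℤ) (k : ℤ) : ℕ := #{n ∈ T | n + k ∈ T}

variable (T : Finset ℤ)

lemma diffCount_le_card (k : ℤ) : diffCount T k ≤ #T := card_filter_le _ _

lemma diffCount_zero : diffCount T 0 = #T := by simp [diffCount]

lemma diffCount_neg (k : ℤ) : diffCount T (-k) = diffCount T k :=
  card_nbij' (· + -k) (· + k) (fun n hn => by simp_all) (fun n hn => by simp_all)
    (fun n _ => by simp) (fun n _ => by simp)

lemma sum_diffCount_mul_le {α : ℤ → ℝ} (hα : ∀ k, 0 ≤ α k) (F : Finset ℤ) :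
    ∑ k ∈ F, (diffCount T k : ℝ) * α k ≤ ∑ n ∈ T, ∑ m ∈ T, α (m - n) := by
  calc ∑ k ∈ F, (diffCount T k : ℝ) * α k = ∑ n ∈ T, ∑ k ∈ F with n + k ∈ T, α k := by
        simp only [diffCount, card_filter, Nat.cast_sum, sum_mul, sum_filter]
        rw [sum_comm]
        simp [ite_mul]
    _ ≤ ∑ n ∈ T, ∑ m ∈ T, α (m - n) := by
      gcongr with n
      calc ∑ k ∈ F with n + k ∈ T, α k
          = ∑ m ∈ {k ∈ F | n + k ∈ T}.image (n + ·), α (m - n) := by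
            rw [sum_image fun _ _ _ _ h => add_left_cancel h]
            simp
        _ ≤ ∑ m ∈ T, α (m - n) :=
            sum_le_sum_of_subset_of_nonneg (by intro m; simp +contextual)
              fun _ _ _ => hα _

lemma sq_card_mul_card_le {E S : Finset ℤ} (hS : ∀ t ∈ T, ∀ e ∈ E, t - e ∈ S) :
    (#E * #T) ^ 2 ≤ #S * ∑ x ∈ E, ∑ y ∈ E, diffCount T (y - x) := by
  have hcount : ∀ e ∈ E, #{s ∈ S | s + e ∈ T} = #T := fun e he =>
    card_nbij' (· + e) (· - e) (fun s hs => by simp_all) (fun t ht => by simp_all)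
      (fun s _ => by simp) (fun t _ => by simp)
  have hpair : ∀ x ∈ E, ∀ y, #{s ∈ S | s + x ∈ T ∧ s + y ∈ T} = diffCount T (y - x) :=
    fun x hx y => card_nbij' (· + x) (· - x) (fun s hs => by simp_all)
      (fun t ht => by simp_all [sub_add_eq_add_sub, add_sub_assoc]) (fun s _ => by simp)
      (fun t _ => by simp)
  -- `g s = #{e ∈ E | s + e ∈ T}` sums to `#E * #T`, and its squares sum to the pair counts.
  set g : ℤ → ℕ := fun s => ∑ e ∈ E, if s + e ∈ T then 1 else 0
  calc (#E * #T) ^ 2 = (∑ s ∈ S, g s) ^ 2 := by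
        rw [sum_comm, ← smul_eq_mul, ← sum_const, sum_congr rfl]
        intro e he
        rw [← hcount e he, card_filter]
    _ ≤ #S * ∑ s ∈ S, g s ^ 2 := sq_sum_le_card_mul_sum_sq
    _ = #S * ∑ x ∈ E, ∑ y ∈ E, diffCount T (y - x) := by
        congr 1
        simp only [g, sq, sum_mul_sum, ite_zero_mul_ite_zero, one_mul]
        rw [sum_comm]
        refine sum_congr rfl fun x hx => ?_
        rw [sum_comm]
        refine sum_congr rfl fun y _ => ?_
        rw [← hpair x hx y, card_filter]

end DiffCount

section BoundedGaps

open Finset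

lemma exists_ne_half_le_of_sq_card_mul_le {σ : ℤ → ℝ} (hσ0 : σ 0 ≤ 1) {ε : ℝ} {E : Finset ℤ}
    (hE : 2 < #E * ε) (hpd : (#E : ℝ) ^ 2 * ε ≤ ∑ x ∈ E, ∑ y ∈ E, σ (y - x)) :
    ∃ x ∈ E, ∃ y ∈ E, x ≠ y ∧ ε / 2 ≤ σ (y - x) := by
  by_contra! hsmall
  have hε : 0 < ε := by
    by_contra! h
    nlinarith [show (0 : ℝ) ≤ #E from Nat.cast_nonneg _]
  have hle : ∑ x ∈ E, ∑ y ∈ E, σ (y - x) ≤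
      ∑ x ∈ E, ∑ y ∈ E, ((if x = y then 1 else 0) + ε / 2) := by
    gcongr with x hx y hy
    by_cases hxy : x = y
    · subst hxy
      simp only [sub_self, if_true]
      linarith
    · simpa [hxy] using (hsmall x hx y hy hxy).le
  simp only [sum_add_distrib, sum_ite_eq, sum_const, nsmul_eq_mul] at hle
  have hdiag : ∑ x ∈ E, (if x ∈ E then (1 : ℝ) else 0) = #E := by
    rw [sum_ite_of_true fun _ h => h]; simp
  nlinarith

lemma exists_bounded_gaps_of_forall_card_eq {D : Set ℤ} (hneg : ∀ d ∈ D, -d ∈ D) {h : ℕ}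
    (hpair : ∀ E : Finset ℤ, #E = h → ∃ x ∈ E, ∃ y ∈ E, x ≠ y ∧ y - x ∈ D) :
    ∃ W : ℕ, ∀ k, ∃ d ∈ D, k ≤ d ∧ d ≤ k + W := by
  have hpos : ∃ L : ℕ, ∀ k : ℤ, 0 < k → ∃ d ∈ D, k ≤ d ∧ d ≤ k + L := by
    by_contra! hgap
    -- Arbitrarily long gaps of `D` in `ℕ` let us extend, greedily, a set whose positive
    -- differences avoid `D`.
    have hfree : ∀ m : ℕ, ∃ E : Finset ℤ, #E = m ∧ ∃ B : ℕ, (∀ x ∈ E, 0 ≤ x ∧ x ≤ B) ∧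
        ∀ x ∈ E, ∀ y ∈ E, x < y → y - x ∉ D := by
      intro m
      induction m with
      | zero => exact ⟨∅, rfl, 0, by simp, by simp⟩
      | succ m ih =>
        obtain ⟨E, hcard, B, hB, hE⟩ := ih
        obtain ⟨k, hk, hkD⟩ := hgap B
        have hnew : (B + k : ℤ) ∉ E := fun h => by linarith [(hB _ h).2]
        refine ⟨insert (B + k) E, by rw [card_insert_of_notMem hnew, hcard],
          (B + k).toNat, ?_, ?_⟩
        · intro x hx
          rcases mem_insert.1 hx with rfl | hx
          · omega
          · have := hB x hx; omega
        · intro x hx y hy hxy hD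
          rcases mem_insert.1 hx with rfl | hx <;> rcases mem_insert.1 hy with rfl | hy
          · exact lt_irrefl _ hxy
          · linarith [(hB y hy).2]
          · have := hB x hx
            have := hkD _ hD (by linarith)
            linarith
          · exact hE x hx y hy hxy hD
    obtain ⟨E, hcard, B, -, hE⟩ := hfree h
    obtain ⟨x, hx, y, hy, hxy, hD⟩ := hpair E hcard
    rcases hxy.lt_or_gt with hlt | hlt
    · exact hE x hx y hy hlt hD
    · exact hE y hy x hx hlt (by simpa using hneg _ hD)
  obtain ⟨L, hL⟩ := hpos
  refine ⟨2 * L + 1, fun k => ?_⟩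
  rcases lt_or_ge 0 k with hk | hk
  · obtain ⟨d, hd, h1, h2⟩ := hL k hk
    exact ⟨d, hd, h1, by omega⟩
  rcases lt_or_ge k (-L) with hk' | hk'
  · obtain ⟨d, hd, h1, h2⟩ := hL (-k - L) (by omega)
    exact ⟨-d, hneg d hd, by omega, by omega⟩
  · obtain ⟨d, hd, h1, h2⟩ := hL 1 one_pos
    exact ⟨d, hd, by omega, by omega⟩

end BoundedGaps

lemma pow_mul_le_of_mul_le_succ {α : ℤ → ℝ} {C : ℝ} (hC : 0 ≤ C) (h : ∀ n, C * α n ≤ α (n + 1))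
    (i : ℤ) (j : ℕ) : C ^ j * α i ≤ α (i + j) := by
  induction j with
  | zero => simp
  | succ j ih =>
    calc C ^ (j + 1) * α i = C * (C ^ j * α i) := by ring
      _ ≤ C * α (i + j) := by gcongr
      _ ≤ α (i + (j + 1 : ℕ)) := by simpa [add_assoc] using h (i + j)

lemma exists_near_mul_le_of_growth {α : ℤ → ℝ} (hα : ∀ k, 0 ≤ α k) {C : ℝ} (hC : 0 < C)
    (hmono : (∀ n, C * α n ≤ α (n + 1)) ∨ (∀ n, C * α (n + 1) ≤ α n))
    {D : Set ℤ} {W : ℕ} (hD : ∀ k, ∃ d ∈ D, k ≤ d ∧ d ≤ k + W) :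
    ∃ c > 0, ∀ k, ∃ d ∈ D, |d - k| ≤ W ∧ c * α k ≤ α d := by
  set C' := min C 1
  have hC' : 0 < C' := lt_min hC one_pos
  have hpow : ∀ j ≤ W, ∀ a, 0 ≤ a → C' ^ W * a ≤ C' ^ j * a := fun j hj a ha =>
    mul_le_mul_of_nonneg_right (pow_le_pow_of_le_one hC'.le (min_le_right _ _) hj) ha
  refine ⟨C' ^ W, pow_pos hC' W, fun k => ?_⟩
  rcases hmono with h | h
  · obtain ⟨d, hd, h1, h2⟩ := hD k
    have hgrow := pow_mul_le_of_mul_le_succ hC'.le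
      (fun n => (mul_le_mul_of_nonneg_right (min_le_left _ _) (hα n)).trans (h n)) k (d - k).toNat
    rw [Int.toNat_of_nonneg (by omega), add_sub_cancel] at hgrow
    exact ⟨d, hd, by rw [abs_le]; omega, (hpow _ (by omega) _ (hα k)).trans hgrow⟩
  · obtain ⟨d, hd, h1, h2⟩ := hD (k - W)
    have hgrow : C' ^ (k - d).toNat * α (-(-k)) ≤ α (-(-k + (k - d).toNat)) :=
      pow_mul_le_of_mul_le_succ (α := fun n => α (-n)) hC'.le
        (fun n => (mul_le_mul_of_nonneg_right (min_le_left _ _) (hα _)).trans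
          (by simpa [add_comm] using h (-(n + 1)))) (-k) (k - d).toNat
    rw [Int.toNat_of_nonneg (by omega), neg_neg, show -k + (k - d) = -d by ring, neg_neg] at hgrow
    exact ⟨d, hd, by rw [abs_le]; omega, (hpow (k - d).toNat (by omega) _ (hα k)).trans hgrow⟩

lemma summable_indicator_of_sum_mul_le {ι : Type*} {α σ : ι → ℝ} (hα : ∀ k, 0 ≤ α k) {c : ℝ}
    (hc : 0 < c) {B : ℝ} (hB : ∀ F : Finset ι, ∑ k ∈ F, σ k * α k ≤ B) :
    Summable ({k | c ≤ σ k}.indicator α) := by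
  classical
  refine summable_of_sum_le (c := B / c) (fun k => Set.indicator_nonneg (fun k _ => hα k) k)
    fun F => ?_
  calc ∑ k ∈ F, {k | c ≤ σ k}.indicator α k = ∑ k ∈ F with c ≤ σ k, α k := by
        rw [Finset.sum_filter]; rfl
    _ ≤ ∑ k ∈ F with c ≤ σ k, σ k * α k / c := by
        gcongr with k hk
        rw [le_div_iff₀ hc, mul_comm]
        exact mul_le_mul_of_nonneg_right (Finset.mem_filter.1 hk).2 (hα k)
    _ ≤ B / c := by
        rw [← Finset.sum_div]
        exact div_le_div_of_nonneg_right (hB _) hc.le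

lemma summable_of_summable_indicator_of_near {α : ℤ → ℝ} (hα : ∀ k, 0 ≤ α k) {D : Set ℤ}
    (hD : Summable (D.indicator α)) {c : ℝ} (hc : 0 < c) {W : ℕ}
    (hnear : ∀ k, ∃ d ∈ D, |d - k| ≤ W ∧ c * α k ≤ α d) : Summable α := by
  have hshift : Summable fun k => c⁻¹ * ∑ j ∈ Finset.Icc (-(W : ℤ)) W, D.indicator α (k + j) :=
    (summable_sum fun j _ => hD.comp_injective (add_left_injective j)).mul_left _
  refine hshift.of_nonneg_of_le hα fun k => ?_
  obtain ⟨d, hd, hdk, hcd⟩ := hnear k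
  rw [le_inv_mul_iff₀ hc]
  refine hcd.trans ?_
  have hmem : d - k ∈ Finset.Icc (-(W : ℤ)) W := Finset.mem_Icc.2 (abs_le.1 hdk)
  calc α d = D.indicator α (k + (d - k)) := by simp [hd]
    _ ≤ _ := Finset.single_le_sum (fun j _ => Set.indicator_nonneg (fun k _ => hα k) _) hmem

section Limit

open Finset Topology

lemma exists_ultrafilter_le_eventually_lt_of_lt_limsup {ι β : Type*}
    [ConditionallyCompleteLinearOrder β] {l : Filter ι} {u : ι → β} {b : β}
    (hu : IsCoboundedUnder (· ≤ ·) l u) (hb : b < limsup u l) :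
    ∃ U : Ultrafilter ι, ↑U ≤ l ∧ ∀ᶠ x in (U : Filter ι), b < u x := by
  have := frequently_iff_neBot.1 (frequently_lt_of_lt_limsup hu hb)
  exact ⟨.of _, (Ultrafilter.of_le _).trans inf_le_left,
    le_principal_iff.1 ((Ultrafilter.of_le _).trans inf_le_right)⟩

lemma Ultrafilter.exists_tendsto_of_mem_Icc {ι : Type*} (U : Ultrafilter ι) {u : ι → ℝ} {a b : ℝ}
    (hu : ∀ x, u x ∈ Set.Icc a b) : ∃ y, Tendsto u U (𝓝 y) := by
  obtain ⟨y, -, hy⟩ := (isCompact_Icc (a := a) (b := b)).ultrafilter_le_nhds (U.map u)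
    (by rw [Ultrafilter.coe_map, le_principal_iff]; exact Filter.mem_map.2 (univ_mem' hu))
  exact ⟨y, hy⟩

lemma exists_tendsto_diffCount_div (U : Ultrafilter ℕ) {T : ℕ → Finset ℤ}
    (hT : ∀ N, #(T N) ≤ 2 * N + 1) :
    ∃ σ : ℤ → ℝ, ∀ k, Tendsto (fun N : ℕ => (diffCount (T N) k : ℝ) / (2 * N + 1)) U (𝓝 (σ k)) :=
  ⟨_, fun k => (U.exists_tendsto_of_mem_Icc (a := 0) (b := 1) fun N =>
    ⟨by positivity, div_le_one_of_le₀ (by exact_mod_cast (diffCount_le_card _ k).trans (hT N))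
      (by positivity)⟩).choose_spec⟩

variable {T : ℕ → Finset ℤ} {U : Filter ℕ} [U.NeBot] {σ : ℤ → ℝ}

lemma limit_diffCount_neg
    (hσ : ∀ k, Tendsto (fun N : ℕ => (diffCount (T N) k : ℝ) / (2 * N + 1)) U (𝓝 (σ k)))
    (k : ℤ) : σ (-k) = σ k :=
  tendsto_nhds_unique (by simpa only [diffCount_neg] using hσ (-k)) (hσ k)

lemma limit_diffCount_zero_le_one (hT : ∀ N, #(T N) ≤ 2 * N + 1)
    (hσ : ∀ k, Tendsto (fun N : ℕ => (diffCount (T N) k : ℝ) / (2 * N + 1)) U (𝓝 (σ k))) :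
    σ 0 ≤ 1 :=
  le_of_tendsto' (hσ 0) fun N => by
    rw [diffCount_zero, div_le_one (by positivity)]
    exact_mod_cast hT N

lemma sum_limit_diffCount_mul_le {α : ℤ → ℝ} (hα : ∀ k, 0 ≤ α k) {M : ℝ}
    (hrow : ∀ N, ∀ n ∈ T N, ∑ m ∈ T N, α (m - n) ≤ M)
    (hσ : ∀ k, Tendsto (fun N : ℕ => (diffCount (T N) k : ℝ) / (2 * N + 1)) U (𝓝 (σ k)))
    (F : Finset ℤ) : ∑ k ∈ F, σ k * α k ≤ M * σ 0 := by
  refine le_of_tendsto_of_tendsto' (tendsto_finsetSum _ fun k _ => (hσ k).mul_const _)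
    ((hσ 0).const_mul M) fun N => ?_
  have hN : (0 : ℝ) < 2 * N + 1 := by positivity
  calc ∑ k ∈ F, (diffCount (T N) k : ℝ) / (2 * N + 1) * α k
      = (∑ k ∈ F, (diffCount (T N) k : ℝ) * α k) / (2 * N + 1) := by
        rw [sum_div]; simp only [div_mul_eq_mul_div]
    _ ≤ (∑ n ∈ T N, ∑ m ∈ T N, α (m - n)) / (2 * N + 1) := by
        gcongr; exact sum_diffCount_mul_le _ hα F
    _ ≤ (#(T N) • M) / (2 * N + 1) := by gcongr; exact sum_le_card_nsmul _ _ _ (hrow N)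
    _ = M * ((diffCount (T N) 0 : ℝ) / (2 * N + 1)) := by
        rw [diffCount_zero, nsmul_eq_mul]; ring

lemma sq_card_mul_sq_le_sum_limit_diffCount (hU : U ≤ atTop)
    (hT : ∀ N : ℕ, T N ⊆ Icc (-(N : ℤ)) N) {δ : ℝ} (hδ0 : 0 ≤ δ)
    (hδ : ∀ᶠ N : ℕ in U, δ * (2 * N + 1) ≤ #(T N))
    (hσ : ∀ k, Tendsto (fun N : ℕ => (diffCount (T N) k : ℝ) / (2 * N + 1)) U (𝓝 (σ k)))
    (E : Finset ℤ) : (#E : ℝ) ^ 2 * δ ^ 2 ≤ ∑ x ∈ E, ∑ y ∈ E, σ (y - x) := by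
  -- `T N - E ⊆ [-(N + K), N + K]`, and `(2N + 2K + 1) / (2N + 1) → 1`.
  set K : ℕ := E.sup Int.natAbs
  have hK : ∀ e ∈ E, |e| ≤ K := fun e he => by
    rw [Int.abs_eq_natAbs]; exact_mod_cast le_sup (f := Int.natAbs) he
  have hwidth : Tendsto (fun N : ℕ => 1 + 2 * K / (2 * (N : ℝ) + 1)) U (𝓝 (1 + 0)) :=
    (tendsto_const_nhds.add (tendsto_const_nhds.div_atTop (tendsto_atTop_add_const_right _ _
      (tendsto_natCast_atTop_atTop.const_mul_atTop two_pos)))).mono_left hU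
  have hlim := hwidth.mul
    (tendsto_finsetSum E fun x _ => tendsto_finsetSum E fun y _ => hσ (y - x))
  rw [add_zero, one_mul] at hlim
  refine ge_of_tendsto hlim (hδ.mono fun N hN => ?_)
  have hS : ∀ t ∈ T N, ∀ e ∈ E, t - e ∈ Finset.Icc (-((N : ℤ) + K)) (N + K) := fun t ht e he => by
    have := mem_Icc.1 (hT N ht); have := abs_le.1 (hK e he)
    exact mem_Icc.2 ⟨by linarith, by linarith⟩
  have hcs : ((#E * #(T N) : ℕ) : ℝ) ^ 2 ≤ ((2 * N + 2 * K + 1 : ℕ) : ℝ) *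
      ∑ x ∈ E, ∑ y ∈ E, (diffCount (T N) (y - x) : ℝ) := by
    have := sq_card_mul_card_le (T N) hS
    rw [Int.card_Icc, show (N + K + 1 - (-((N : ℤ) + K))).toNat = 2 * N + 2 * K + 1 by omega]
      at this
    exact_mod_cast this
  push_cast at hcs
  have hEN : ((#E : ℝ) * (δ * (2 * N + 1))) ^ 2 ≤ ((#E : ℝ) * #(T N)) ^ 2 := by
    gcongr
  have h2N : (0 : ℝ) < 2 * N + 1 := by positivity
  simp_rw [← sum_div]
  rw [show ∀ s : ℝ, (1 + 2 * K / (2 * N + 1)) * (s / (2 * N + 1))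
      = (2 * N + 2 * K + 1) * s / (2 * N + 1) ^ 2 from fun s => by field_simp; ring,
    le_div_iff₀ (by positivity)]
  linarith

end Limit

lemma ncard_inter_Icc_eq_card_filter (A : Set ℤ) [DecidablePred (· ∈ A)] (a b : ℤ) :
    (A ∩ Set.Icc a b).ncard = {n ∈ Finset.Icc a b | n ∈ A}.card := by
  rw [← Set.ncard_coe_finset, Finset.coe_filter]
  congr 1
  ext
  simp only [mem_inter_iff, Finset.mem_Icc, mem_ofPred_eq, mem_Icc]
  tauto

lemma sum_le_tsum_subtype {ι : Type*} {f : ι → ℝ} (hf : ∀ i, 0 ≤ f i) {A : Set ι}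
    (hA : Summable fun a : A => f a) {s : Finset ι} (hs : ∀ i ∈ s, i ∈ A) :
    ∑ i ∈ s, f i ≤ ∑' a : A, f a := by
  classical
  rw [← Finset.sum_subtype_of_mem _ hs]
  exact hA.sum_le_tsum _ fun _ _ => hf _

/-- Bayart–Ruzsa: If `(α_n)_{n∈ℤ}` is nonnegative with `α_{n+1} ≥ C α_n` for
all `n`, or `α_n ≥ C α_{n+1}` for all `n` (some `C > 0`), and there is `A ⊆ ℤ` of positive
upper density such that the sums `β_n = ∑_{m∈A} α_{m−n}`, `n ∈ A`, converge and are
uniformly bounded, then `∑_{n∈ℤ} α_n < ∞`. -/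
theorem stmt_5 (α : ℤ → ℝ) (hnn : ∀ n, 0 ≤ α n) (C : ℝ) (hC : 0 < C)
    (hmono : (∀ n : ℤ, C * α n ≤ α (n + 1)) ∨ (∀ n : ℤ, C * α (n + 1) ≤ α n))
    (A : Set ℤ)
    (hA : 0 < Filter.limsup
      (fun N : ℕ => ((A ∩ Set.Icc (-(N : ℤ)) (N : ℤ)).ncard : ℝ) / (2 * N + 1)) Filter.atTop)
    (hconv : ∀ n ∈ A, Summable fun m : A => α ((m : ℤ) - n))
    (M : ℝ) (hbd : ∀ n ∈ A, (∑' m : A, α ((m : ℤ) - n)) ≤ M) :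
    Summable α := by
  classical
  set T : ℕ → Finset ℤ := fun N => {n ∈ Finset.Icc (-(N : ℤ)) N | n ∈ A}
  have hTsub : ∀ N : ℕ, T N ⊆ Finset.Icc (-(N : ℤ)) N := fun N => Finset.filter_subset _ _
  have hTcard : ∀ N : ℕ, (T N).card ≤ 2 * N + 1 := fun N =>
    (Finset.card_le_card (hTsub N)).trans (by rw [Int.card_Icc]; omega)
  have hTA : ∀ N, ∀ n ∈ T N, n ∈ A := fun N n hn => (Finset.mem_filter.1 hn).2
  have hrow : ∀ N, ∀ n ∈ T N, ∑ m ∈ T N, α (m - n) ≤ M := fun N n hn =>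
    (sum_le_tsum_subtype (fun _ => hnn _) (hconv n (hTA N n hn)) (hTA N)).trans
      (hbd n (hTA N n hn))
  obtain ⟨δ, hδ, hδlt⟩ := exists_between hA
  obtain ⟨U, hU, hUδ⟩ := exists_ultrafilter_le_eventually_lt_of_lt_limsup
    (isCoboundedUnder_le_of_le atTop fun N => by positivity) hδlt
  have hUT : ∀ᶠ N : ℕ in (U : Filter ℕ), δ * (2 * N + 1) ≤ (T N).card := hUδ.mono fun N hN => by
    rw [lt_div_iff₀ (by positivity), ncard_inter_Icc_eq_card_filter] at hN
    exact hN.le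
  obtain ⟨σ, hσ⟩ := exists_tendsto_diffCount_div U hTcard
  set D := {d | δ ^ 2 / 2 ≤ σ d}
  have hbig : 2 < ((⌈2 / δ ^ 2⌉₊ + 1 : ℕ) : ℝ) * δ ^ 2 := by
    rw [← div_lt_iff₀ (by positivity)]; push_cast; linarith [Nat.le_ceil (2 / δ ^ 2)]
  obtain ⟨W, hW⟩ := exists_bounded_gaps_of_forall_card_eq (D := D)
    (fun d hd => by simpa [D, limit_diffCount_neg hσ] using hd) fun E hE =>
      exists_ne_half_le_of_sq_card_mul_le (limit_diffCount_zero_le_one hTcard hσ) (hE ▸ hbig)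
        (sq_card_mul_sq_le_sum_limit_diffCount hU hTsub hδ.le hUT hσ E)
  obtain ⟨c, hc, hnear⟩ := exists_near_mul_le_of_growth hnn hC hmono hW
  exact summable_of_summable_indicator_of_near hnn
    (summable_indicator_of_sum_mul_le hnn (by positivity) (sum_limit_diffCount_mul_le hnn hrow hσ))
    hc hnear
end

section
/- Let X = ℤ × ℤ, f(i,j) = (i, j+1), and μ the measure on the power set of X with μ({(i,j)}) = 2^{−|j|}. Then μ(X) = ∞, f is dissipative (with wandering set ℤ × {0} generating X), and f satisfies the Summability Condition (SC): for each ε > 0 and each B ⊆ X with μ(B) < ∞, there exists B' ⊆ B with μ(B∖B') < ε and ∑_{n∈ℤ} μ(fⁿ(B')) < ∞. -/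
open MeasureTheory Set Filter
open scoped ENNReal NNReal

/-!
The map is translation by `(0, 1)` on `ℤ × ℤ`, so its `n`-th power carries the line `ℤ × {0}`
onto `ℤ × {n}`; these lines partition the plane, and each has infinite measure.
For (SC): on a countable space a set of finite measure is a finite set up to measure `ε`, and
the orbit of a finite set has total measure at most the sum over its points of the orbit
measures of single points, each equal to `∑_{m ∈ ℤ} 2^{-|m|} = 3`.
-/

lemma zimg_add_right {G : Type*} [AddGroup G] (a : G) (n : ℤ) (B : Set G) :
    zimg (· + a) n B = (· + n • a) '' B := by
  unfold zimg
  split_ifs with hn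
  · rw [add_right_iterate, ← natCast_zsmul, Int.toNat_of_nonneg hn]
  · rw [add_right_iterate, Set.image_add_right, ← natCast_zsmul,
      Int.toNat_of_nonneg (by omega), neg_zsmul]

lemma zimg_eq_biUnion {X : Type*} (f : X → X) (n : ℤ) (B : Set X) :
    zimg f n B = ⋃ x ∈ B, zimg f n {x} := by
  unfold zimg
  split_ifs <;> simp only [← Set.image_iUnion₂, ← Set.preimage_iUnion₂, Set.biUnion_of_singleton]

lemma exists_finset_subset_measure_diff_lt {X : Type*} [MeasurableSpace X] [Countable X]
    [MeasurableSingletonClass X] (μ : Measure X) {B : Set X} (hB : μ B ≠ ⊤) {ε : ℝ≥0∞}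
    (hε : 0 < ε) : ∃ s : Finset X, ↑s ⊆ B ∧ μ (B \ s) < ε := by
  classical
  have hlim : Tendsto (fun s : Finset X => μ (B \ s)) atTop (nhds 0) := by
    have h := tendsto_measure_iInter_atTop (μ := μ) (s := fun s : Finset X => B \ s)
      (fun s => (Set.to_countable _).measurableSet.nullMeasurableSet)
      (fun s t hst => Set.sdiff_subset_sdiff_right (Finset.coe_subset.2 hst))
      ⟨∅, by simpa using hB⟩
    have hempty : (⋂ s : Finset X, B \ s) = ∅ :=
      Set.eq_empty_of_forall_notMem fun x hx => (Set.mem_iInter.1 hx {x}).2 (by simp)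
    rwa [hempty, measure_empty] at h
  obtain ⟨s, hs⟩ := (hlim.eventually_lt_const hε).exists
  refine ⟨s.filter (· ∈ B), by simp [Set.subset_def], ?_⟩
  rwa [Finset.coe_filter, Set.ofPred_and, Finset.setOfPred_mem, Set.ofPred_mem_eq,
    Set.sdiff_inter_self_eq_sdiff]

theorem sccond_of_tsum_measure_zimg_singleton_ne_top {X : Type*} [MeasurableSpace X]
    [Countable X] [MeasurableSingletonClass X] (μ : Measure X) (f : X → X)
    (h : ∀ x, ∑' n : ℤ, μ (zimg f n {x}) ≠ ⊤) : SCcond μ f := by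
  intro ε hε B _ hB
  obtain ⟨s, hsB, hs⟩ := exists_finset_subset_measure_diff_lt μ hB.ne hε
  refine ⟨s, hsB, (Set.to_countable _).measurableSet, hs, ?_⟩
  have hle : ∀ n, μ (zimg f n s) ≤ ∑ x ∈ s, μ (zimg f n {x}) := fun n => by
    rw [zimg_eq_biUnion]
    exact measure_biUnion_finset_le s _
  refine ne_of_lt ?_
  calc ∑' n : ℤ, μ (zimg f n s) ≤ ∑' n : ℤ, ∑ x ∈ s, μ (zimg f n {x}) := ENNReal.tsum_le_tsum hle
    _ = ∑ x ∈ s, ∑' n : ℤ, μ (zimg f n {x}) := Summable.tsum_finsetSum fun _ _ => ENNReal.summable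
    _ < ⊤ := ENNReal.sum_lt_top.2 fun x _ => (h x).lt_top

lemma tsum_inv_two_pow_natAbs : ∑' m : ℤ, (2⁻¹ : ℝ≥0∞) ^ m.natAbs = 3 := by
  rw [tsum_of_nat_of_neg_add_one ENNReal.summable ENNReal.summable]
  have hk : ∀ k : ℕ, ((k : ℤ) + 1).natAbs = k + 1 := fun k => by omega
  simp only [Int.natAbs_natCast, Int.natAbs_neg, hk, pow_succ, ENNReal.tsum_mul_right,
    ENNReal.tsum_geometric, ENNReal.one_sub_inv_two, inv_inv]
  rw [ENNReal.mul_inv_cancel two_ne_zero ENNReal.ofNat_ne_top]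
  norm_num

lemma two_zpow_neg_abs (m : ℤ) : (2 : ℝ≥0∞) ^ (-|m|) = 2⁻¹ ^ m.natAbs := by
  rw [Int.abs_eq_natAbs, ENNReal.zpow_neg, zpow_natCast, ENNReal.inv_pow]

lemma zimg_vertical_shift (n : ℤ) (B : Set (ℤ × ℤ)) :
    zimg (fun p : ℤ × ℤ => (p.1, p.2 + 1)) n B = (· + (0, n)) '' B := by
  have hshift : (fun p : ℤ × ℤ => (p.1, p.2 + 1)) = (· + (0, 1)) := by
    funext p; ext <;> simp
  rw [hshift, zimg_add_right]
  simp

lemma zimg_vertical_shift_horizontal_line (n : ℤ) :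
    zimg (fun p : ℤ × ℤ => (p.1, p.2 + 1)) n (Set.univ ×ˢ {0}) = Set.univ ×ˢ {n} := by
  ext ⟨i, j⟩
  simp [zimg_vertical_shift, add_neg_eq_zero]

lemma measure_singleton_eq {μ : Measure (ℤ × ℤ)}
    (hμ : ∀ B : Set (ℤ × ℤ), μ B = ∑' p : B, (2 : ℝ≥0∞) ^ (-|(p : ℤ × ℤ).2|)) (q : ℤ × ℤ) :
    μ {q} = 2⁻¹ ^ q.2.natAbs := by
  rw [hμ, tsum_singleton q fun p : ℤ × ℤ => (2 : ℝ≥0∞) ^ (-|p.2|), two_zpow_neg_abs]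

lemma measure_univ_eq_top {μ : Measure (ℤ × ℤ)}
    (hμ : ∀ B : Set (ℤ × ℤ), μ B = ∑' p : B, (2 : ℝ≥0∞) ^ (-|(p : ℤ × ℤ).2|)) :
    μ Set.univ = ⊤ := by
  have hline : ∑' i : ℤ, μ {(i, 0)} = ⊤ := by
    simp [measure_singleton_eq hμ]
  have hdisj : Pairwise fun i j : ℤ => Disjoint ({(i, 0)} : Set (ℤ × ℤ)) {(j, 0)} :=
    fun i j hij => Set.disjoint_singleton.2 (by simpa using hij)
  rw [← top_le_iff, ← hline, ← measure_iUnion hdisj fun _ => measurableSet_singleton _]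
  exact measure_mono (Set.subset_univ _)

lemma tsum_measure_zimg_vertical_shift_singleton {μ : Measure (ℤ × ℤ)}
    (hμ : ∀ B : Set (ℤ × ℤ), μ B = ∑' p : B, (2 : ℝ≥0∞) ^ (-|(p : ℤ × ℤ).2|)) (q : ℤ × ℤ) :
    ∑' n : ℤ, μ (zimg (fun p : ℤ × ℤ => (p.1, p.2 + 1)) n {q}) = 3 := by
  simp only [zimg_vertical_shift, Set.image_singleton, measure_singleton_eq hμ, Prod.snd_add]
  exact ((Equiv.addLeft q.2).tsum_eq _).trans tsum_inv_two_pow_natAbs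

/-- On `X = ℤ × ℤ` with `f(i,j) = (i, j+1)` and `μ({(i,j)}) = 2^{−|j|}`
(so `μ B = ∑_{p ∈ B} 2^{−|p₂|}`): `μ(X) = ∞`, `f` is dissipative with generating
wandering set `ℤ × {0}`, and `f` satisfies Condition (SC). -/
theorem stmt_11 (μ : Measure (ℤ × ℤ))
    (hμ : ∀ B : Set (ℤ × ℤ), μ B = ∑' p : B, (2 : ℝ≥0∞) ^ (-|(p : ℤ × ℤ).2|)) :
    μ Set.univ = ⊤ ∧
    Wandering (fun p : ℤ × ℤ => (p.1, p.2 + 1)) (Set.univ ×ˢ {0}) ∧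
    GeneratedBy (fun p : ℤ × ℤ => (p.1, p.2 + 1)) (Set.univ ×ˢ {0}) ∧
    SCcond μ (fun p : ℤ × ℤ => (p.1, p.2 + 1)) := by
  refine ⟨measure_univ_eq_top hμ, fun m n hmn => ?_, ?_,
    sccond_of_tsum_measure_zimg_singleton_ne_top μ _ fun q => ?_⟩
  · show Disjoint _ _
    rw [zimg_vertical_shift_horizontal_line, zimg_vertical_shift_horizontal_line]
    exact Set.disjoint_prod.2 (Or.inr (Set.disjoint_singleton.2 hmn))
  · simp only [GeneratedBy, zimg_vertical_shift_horizontal_line, ← Set.prod_iUnion,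
      Set.iUnion_of_singleton, Set.univ_prod_univ]
  · simp [tsum_measure_zimg_vertical_shift_singleton hμ q]
end

section
/- Let X = ∏_{i=1}^∞ A_i, where A_i = ℤ_2 for i even and A_i = ℤ_{2i} for i odd, with the product topology, and let f : X → X be the odometer (+1 map with carryover). Let μ be the product measure determined by μ_i(0)=μ_i(1)=1/2 for i even, and for i odd μ_i(j) = (1−2^{−i})/i for 0 ≤ j ≤ i−1 and μ_i(j) = 2^{−i}/i for i ≤ j ≤ 2i−1. Then for every basic cylinder C = [a₁,…,a_i], setting N = |A₁|·|A₂|⋯|A_i|, one has f^{−N}(C) = C, and hence the indicator χ_C is a periodic point of the composition operator T_f on L^p(X); consequently T_f has a dense set of periodic points. -/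
open MeasureTheory Set Filter
open scoped ENNReal NNReal

/-- The size of the `i`-th digit set (0-based `i`, paper index `i+1`):
`|A_j| = 2` for `j` even, `|A_j| = 2j` for `j` odd. -/
def odoSize (i : ℕ) : ℕ := (if (i + 1) % 2 = 0 then 1 else 2 * i + 1) + 1

instance (i : ℕ) : NeZero (odoSize i) := ⟨Nat.succ_ne_zero _⟩

/-- The odometer space `X = ∏ A_i`. -/
abbrev OdoX : Type := ∀ i : ℕ, Fin (odoSize i)

-- The odometer (+1 with carryover): add 1 at position `i` iff all previous digits
-- are maximal.
open scoped Classical in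
noncomputable def odoMap : OdoX → OdoX := fun x i =>
  if ∀ j, j < i → ((x j : ℕ) = odoSize j - 1) then x i + 1 else x i

/-- The weight of digit `k` at coordinate `i` (paper index `j = i+1`):
`1/2` for `j` even; for `j` odd, `(1−2^{−j})/j` for digits `< j` and `2^{−j}/j`
for digits `≥ j`. -/
noncomputable def odoW (i : ℕ) (k : Fin (odoSize i)) : ℝ≥0∞ :=
  if (i + 1) % 2 = 0 then 1 / 2
  else if (k : ℕ) < i + 1 then (1 - (2 : ℝ≥0∞)⁻¹ ^ (i + 1)) / (i + 1)
  else (2 : ℝ≥0∞)⁻¹ ^ (i + 1) / (i + 1)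

/-!
Read the first `n` digits of `x` as a mixed-radix number `value n x < base n = |A₁|⋯|Aₙ|`;
the odometer adds `1` to it modulo `base n`. Hence `f^[base n]` fixes every cylinder of length
`n`, and `T ^ base n` fixes its indicator. The periodic points of `T` form a subspace containing
all indicators of cylinders, and these span a dense subspace of `Lᵖ` because the cylinders form an
algebra generating the σ-algebra.

That `T` acts on indicators as `χ_C ↦ χ_{f⁻¹ C}` needs `f` to be nonsingular, which follows from
`μ (f⁻¹ C) ≤ 8 μ C` for cylinders. Under the carry, the maximal digits below the carry position
become `0`, which never lowers their weight; the incremented digit, at an odd position `m`, can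
lose a factor `2^m - 1`, and this is compensated by the carried digit at position `m - 2`, which
gains the factor `2^(m-2) - 1`; and `(2^m - 1) / (2^(m-2) - 1) ≤ 8`.
-/

open scoped symmDiff

lemma Nat.add_mul_eq_add_mul_iff_of_lt {a b c d m : ℕ} (ha : a < m) (hc : c < m) :
    a + b * m = c + d * m ↔ a = c ∧ b = d := by
  refine ⟨fun h => ?_, fun ⟨hac, hbd⟩ => hac ▸ hbd ▸ rfl⟩
  have hac : a = c := by
    simpa [Nat.add_mul_mod_self_right, Nat.mod_eq_of_lt ha, Nat.mod_eq_of_lt hc] using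
      congrArg (· % m) h
  subst hac
  exact ⟨rfl, Nat.eq_of_mul_eq_mul_right (ha.trans_le' (Nat.zero_le _)) (by omega)⟩

lemma ENNReal.inv_two_le_one_sub_of_le {r : ℝ≥0∞} (hr : r ≤ 2⁻¹) : (2 : ℝ≥0∞)⁻¹ ≤ 1 - r :=
  ENNReal.one_sub_inv_two.symm.trans_le (tsub_le_tsub_left hr 1)

namespace MeasureTheory.Measure

variable {α : Type*} [MeasurableSpace α] {μ ν : Measure α}

theorem le_of_forall_measure_singleton_le [Finite α] [MeasurableSingletonClass α]
    (h : ∀ a, ν {a} ≤ μ {a}) : ν ≤ μ := by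
  classical
  have := Fintype.ofFinite α
  refine le_iff'.2 fun s => ?_
  rw [← s.coe_toFinset, ← sum_measure_singleton, ← sum_measure_singleton]
  exact Finset.sum_le_sum fun a _ => h a

theorem le_of_forall_le_of_isSetAlgebra [IsFiniteMeasure μ] [IsFiniteMeasure ν]
    {𝒜 : Set (Set α)} (h𝒜 : IsSetAlgebra 𝒜)
    (hgen : ‹MeasurableSpace α› = MeasurableSpace.generateFrom 𝒜) (h : ∀ s ∈ 𝒜, ν s ≤ μ s) :
    ν ≤ μ := by
  have hdense := MeasureDense.of_generateFrom_isSetAlgebra_finite (μ + ν) h𝒜 hgen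
  refine le_iff.2 fun s hs => ENNReal.le_of_forall_pos_le_add fun ε hε _ => ?_
  obtain ⟨t, ht, hst⟩ := hdense.approx s hs (measure_ne_top _ _) ε hε
  rw [ENNReal.ofReal_coe_nnreal] at hst
  calc ν s ≤ ν t + ν (s ∆ t) := tsub_le_iff_left.mp le_measure_symmDiff
    _ ≤ μ t + ν (s ∆ t) := add_le_add (h t ht) le_rfl
    _ ≤ μ s + μ (t ∆ s) + ν (s ∆ t) := by gcongr; exact tsub_le_iff_left.mp le_measure_symmDiff
    _ = μ s + (μ + ν) (s ∆ t) := by rw [symmDiff_comm, add_apply, add_assoc]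
    _ ≤ μ s + ε := by gcongr

end MeasureTheory.Measure

section PeriodicPoints

variable {R M : Type*} [Semiring R] [TopologicalSpace M] [AddCommMonoid M] [Module R M]

lemma ContinuousLinearMap.pow_mul_apply_eq_self {T : M →L[R] M} {N : ℕ} {x : M}
    (h : (T ^ N) x = x) (k : ℕ) : (T ^ (N * k)) x = x := by
  rw [pow_mul]
  induction k with
  | zero => rfl
  | succ k ih => rw [pow_succ, mul_apply_eq_comp, h, ih]

def ContinuousLinearMap.periodicPoints (T : M →L[R] M) : Submodule R M where
  carrier := {x | ∃ N : ℕ, 1 ≤ N ∧ (T ^ N) x = x}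
  zero_mem' := ⟨1, le_rfl, map_zero _⟩
  add_mem' := by
    rintro x y ⟨N, hN, hx⟩ ⟨K, hK, hy⟩
    refine ⟨N * K, Nat.one_le_iff_ne_zero.mpr (by positivity), ?_⟩
    rw [map_add, T.pow_mul_apply_eq_self hx, mul_comm, T.pow_mul_apply_eq_self hy]
  smul_mem' := by
    rintro c x ⟨N, hN, hx⟩
    exact ⟨N, hN, by rw [map_smul, hx]⟩

end PeriodicPoints

section CompositionOperator

variable {α E : Type*} [MeasurableSpace α] {μ : Measure α} [IsFiniteMeasure μ]
  [NormedAddCommGroup E] [NormedSpace ℝ E] {p : ℝ≥0∞} [Fact (1 ≤ p)]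

lemma pow_apply_indicatorConstLp {f : α → α} (hf : Measure.QuasiMeasurePreserving f μ μ)
    {T : Lp E p μ →L[ℝ] Lp E p μ} (hT : ∀ φ : Lp E p μ, T φ =ᵐ[μ] fun x => φ (f x))
    (k : ℕ) {s : Set α} (hs : MeasurableSet s) (c : E) :
    (T ^ k) (indicatorConstLp p hs (measure_ne_top μ s) c)
      = indicatorConstLp p (hf.measurable.iterate k hs) (measure_ne_top μ _) c := by
  induction k with
  | zero => rfl
  | succ k ih =>
    rw [pow_succ', mul_apply_eq_comp, ih]
    refine Lp.ext ((hT _).trans ((hf.ae_eq indicatorConstLp_coeFn).trans ?_))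
    exact (Filter.EventuallyEq.of_eq (funext fun x => (Set.indicator_comp_right f).symm)).trans
      indicatorConstLp_coeFn.symm

lemma dense_of_indicatorConstLp_mem [Fact (p ≠ ∞)] {𝒜 : Set (Set α)} (h𝒜 : μ.MeasureDense 𝒜)
    (V : Submodule ℝ (Lp E p μ))
    (hV : ∀ s (hs : s ∈ 𝒜) (c : E),
      indicatorConstLp p (h𝒜.measurable s hs) (measure_ne_top μ s) c ∈ V) :
    Dense (V : Set (Lp E p μ)) := by
  suffices ∀ φ, φ ∈ V.topologicalClosure from
    fun φ => V.topologicalClosure_coe ▸ this φ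
  refine Lp.induction Fact.out _ (fun c s hs hμs => ?_)
    (fun _ _ _ _ _ => V.topologicalClosure.add_mem) V.isClosed_topologicalClosure
  rw [Lp.simpleFunc.coe_indicatorConst, ← SetLike.mem_coe, Submodule.topologicalClosure_coe]
  refine closure_mono ?_ (h𝒜.indicatorConstLp_subset_closure p c ⟨s, hs, hμs.ne, rfl⟩)
  rintro - ⟨t, ht, hμt, rfl⟩
  exact hV t ht c

end CompositionOperator

namespace Odometer

lemma two_le_odoSize (i : ℕ) : 2 ≤ odoSize i := by
  unfold odoSize; split <;> omega

def base (n : ℕ) : ℕ := ∏ j ∈ Finset.range n, odoSize j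

lemma base_succ (n : ℕ) : base (n + 1) = base n * odoSize n := Finset.prod_range_succ _ _

lemma base_pos (n : ℕ) : 0 < base n :=
  Finset.prod_pos fun j _ => (two_le_odoSize j).trans_lt' two_pos

def value (n : ℕ) (x : OdoX) : ℕ := ∑ j ∈ Finset.range n, (x j : ℕ) * base j

lemma value_succ (n : ℕ) (x : OdoX) : value (n + 1) x = value n x + (x n : ℕ) * base n :=
  Finset.sum_range_succ _ _

lemma value_lt_base (n : ℕ) (x : OdoX) : value n x < base n := by
  induction n with
  | zero => simp [value, base]
  | succ n ih =>
    have hx := (x n).isLt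
    rw [value_succ, base_succ]
    nlinarith

lemma value_eq_base_sub_one_iff {n : ℕ} {x : OdoX} :
    value n x = base n - 1 ↔ ∀ j < n, (x j : ℕ) = odoSize j - 1 := by
  induction n with
  | zero => simp [value, base]
  | succ n ih =>
    have hb := base_pos n
    have hs := two_le_odoSize n
    have hlast : base (n + 1) - 1 = (base n - 1) + (odoSize n - 1) * base n := by
      have : base n ≤ odoSize n * base n := Nat.le_mul_of_pos_left _ (by omega)
      rw [base_succ, Nat.sub_one_mul, mul_comm]
      omega
    rw [value_succ, hlast, Nat.add_mul_eq_add_mul_iff_of_lt (value_lt_base n x) (by omega), ih,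
      Nat.forall_lt_succ_right]

lemma val_add_one {i : ℕ} (k : Fin (odoSize i)) :
    ((k + 1 : Fin (odoSize i)) : ℕ) = ((k : ℕ) + 1) % odoSize i := by
  have := two_le_odoSize i
  rw [Fin.val_add, Fin.val_one', Nat.mod_eq_of_lt (a := 1) (by omega)]

lemma val_add_one_of_lt {i : ℕ} {k : Fin (odoSize i)} (hk : (k : ℕ) + 1 < odoSize i) :
    ((k + 1 : Fin (odoSize i)) : ℕ) = k + 1 := by
  rw [val_add_one, Nat.mod_eq_of_lt hk]

lemma add_one_eq_zero {i : ℕ} {k : Fin (odoSize i)} (hk : (k : ℕ) = odoSize i - 1) :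
    k + 1 = 0 := by
  have := two_le_odoSize i
  ext
  rw [val_add_one, hk, Nat.sub_add_cancel (by omega), Nat.mod_self, Fin.val_zero]

lemma odoMap_apply_of_forall {x : OdoX} {n : ℕ} (h : ∀ j < n, (x j : ℕ) = odoSize j - 1) :
    odoMap x n = x n + 1 := by
  rw [odoMap, if_pos h]

lemma odoMap_apply_eq_zero {x : OdoX} {n : ℕ} (h : ∀ j < n, (x j : ℕ) = odoSize j - 1) {j : ℕ}
    (hj : j < n) : odoMap x j = 0 := by
  rw [odoMap_apply_of_forall fun k hk => h k (hk.trans hj), add_one_eq_zero (h j hj)]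

lemma val_odoMap_of_forall {x : OdoX} {n : ℕ} (h : ∀ j < n, (x j : ℕ) = odoSize j - 1) :
    (odoMap x n : ℕ) = ((x n : ℕ) + 1) % odoSize n := by
  rw [odoMap_apply_of_forall h, val_add_one]

lemma odoMap_apply_of_not_forall {x : OdoX} {n : ℕ} (h : ¬ ∀ j < n, (x j : ℕ) = odoSize j - 1) :
    odoMap x n = x n := by
  rw [odoMap, if_neg h]

lemma value_odoMap (n : ℕ) (x : OdoX) : value n (odoMap x) = (value n x + 1) % base n := by
  induction n with
  | zero => simp [value, base]
  | succ n ih =>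
    have hb := base_pos n
    have hv := value_lt_base n x
    have hx := (x n).isLt
    rw [value_succ, value_succ, ih, base_succ]
    by_cases hcarry : ∀ j < n, (x j : ℕ) = odoSize j - 1
    · rw [value_eq_base_sub_one_iff.mpr hcarry, val_odoMap_of_forall hcarry,
        Nat.sub_add_cancel hb, Nat.mod_self, zero_add, mul_comm (base n),
        ← Nat.mul_mod_mul_right]
      congr 1; rw [add_mul, one_mul]; omega
    · have hv' : value n x + 1 < base n := by
        have := mt value_eq_base_sub_one_iff.mp hcarry; omega
      rw [odoMap_apply_of_not_forall hcarry, Nat.mod_eq_of_lt hv', Nat.mod_eq_of_lt]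
      · ring
      · nlinarith

lemma value_iterate_odoMap (n k : ℕ) (x : OdoX) :
    value n (odoMap^[k] x) = (value n x + k) % base n := by
  induction k with
  | zero => simp [Nat.mod_eq_of_lt (value_lt_base n x)]
  | succ k ih =>
    rw [Function.iterate_succ_apply', value_odoMap, ih, Nat.mod_add_mod, add_assoc]

lemma eq_of_value_eq {n : ℕ} {x y : OdoX} (h : value n x = value n y) : ∀ j < n, x j = y j := by
  induction n with
  | zero => simp
  | succ n ih =>
    rw [value_succ, value_succ, Nat.add_mul_eq_add_mul_iff_of_lt (value_lt_base n x)
      (value_lt_base n y)] at h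
    exact Nat.forall_lt_succ_right.mpr ⟨ih h.1, Fin.val_injective h.2⟩

lemma iterate_base_odoMap_apply (n : ℕ) (x : OdoX) : ∀ j < n, odoMap^[base n] x j = x j :=
  eq_of_value_eq (by rw [value_iterate_odoMap, Nat.add_mod_right,
    Nat.mod_eq_of_lt (value_lt_base n x)])

abbrev Prefix (n : ℕ) : Type := ∀ j : Fin n, Fin (odoSize j)

def toPrefix (n : ℕ) (x : OdoX) : Prefix n := fun j => x j

lemma toPrefix_surjective (n : ℕ) : Function.Surjective (toPrefix n) := fun a =>
  ⟨fun i => if h : i < n then a ⟨i, h⟩ else 0, funext fun j => dif_pos j.isLt⟩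

lemma toPrefix_eq_toPrefix_iff {n : ℕ} {x y : OdoX} :
    toPrefix n x = toPrefix n y ↔ ∀ j < n, x j = y j :=
  ⟨fun h j hj => congrFun h ⟨j, hj⟩, fun h => funext fun j => h j j.isLt⟩

lemma setOf_forall_eq_eq_preimage_toPrefix (n : ℕ) (a : Prefix n) :
    {x : OdoX | ∀ j : Fin n, x j = a j} = toPrefix n ⁻¹' {a} := by
  ext x
  simp [toPrefix, funext_iff]

lemma toPrefix_odoMap_congr {n : ℕ} {x y : OdoX} (h : toPrefix n x = toPrefix n y) :
    toPrefix n (odoMap x) = toPrefix n (odoMap y) := by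
  have hxy := toPrefix_eq_toPrefix_iff.mp h
  funext j
  have hcarry : (∀ k < (j : ℕ), (x k : ℕ) = odoSize k - 1) ↔
      ∀ k < (j : ℕ), (y k : ℕ) = odoSize k - 1 :=
    forall₂_congr fun k hk => by rw [hxy k (hk.trans j.isLt)]
  simp only [toPrefix, odoMap, hcarry, hxy j j.isLt]

-- Well defined: the first `n` digits of `odoMap x` depend only on those of `x`.
noncomputable def prefixStep (n : ℕ) (a : Prefix n) : Prefix n :=
  toPrefix n (odoMap (Function.surjInv (toPrefix_surjective n) a))

lemma semiconj_toPrefix (n : ℕ) : Function.Semiconj (toPrefix n) odoMap (prefixStep n) :=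
  fun x => toPrefix_odoMap_congr (Function.surjInv_eq (toPrefix_surjective n) (toPrefix n x)).symm

lemma prefixStep_iterate_base (n : ℕ) : (prefixStep n)^[base n] = id := by
  funext a
  obtain ⟨x, rfl⟩ := toPrefix_surjective n a
  rw [← (semiconj_toPrefix n).iterate_right, id,
    toPrefix_eq_toPrefix_iff.mpr (iterate_base_odoMap_apply n x)]

lemma prefixStep_bijective (n : ℕ) : Function.Bijective (prefixStep n) := by
  have h := prefixStep_iterate_base n
  obtain ⟨m, hm⟩ := Nat.exists_eq_add_one_of_ne_zero (base_pos n).ne'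
  rw [hm] at h
  refine Function.bijective_iff_has_inverse.mpr ⟨(prefixStep n)^[m], ?_, ?_⟩
  · exact congrFun h
  · rw [Function.iterate_succ'] at h
    exact congrFun h

lemma preimage_iterate_base_odoMap (n : ℕ) (S : Set (Prefix n)) :
    odoMap^[base n] ⁻¹' (toPrefix n ⁻¹' S) = toPrefix n ⁻¹' S := by
  rw [← Set.preimage_comp, ((semiconj_toPrefix n).iterate_right _).comp_eq,
    prefixStep_iterate_base, Function.id_comp]

lemma odoSize_of_odd {i : ℕ} (hi : ¬(i + 1) % 2 = 0) : odoSize i = 2 * i + 2 := by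
  simp [odoSize, hi]

lemma odoW_of_even {i : ℕ} (hi : (i + 1) % 2 = 0) (k : Fin (odoSize i)) : odoW i k = 1 / 2 := by
  simp [odoW, hi]

lemma odoW_of_lt {i : ℕ} (hi : ¬(i + 1) % 2 = 0) {k : Fin (odoSize i)} (hk : (k : ℕ) < i + 1) :
    odoW i k = (1 - 2⁻¹ ^ (i + 1)) / (i + 1) := by
  simp [odoW, hi, hk]

lemma odoW_of_le {i : ℕ} (hi : ¬(i + 1) % 2 = 0) {k : Fin (odoSize i)} (hk : i + 1 ≤ (k : ℕ)) :
    odoW i k = 2⁻¹ ^ (i + 1) / (i + 1) := by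
  simp [odoW, hi, hk.not_gt]

lemma odoW_le_odoW_add_one {i : ℕ} (k : Fin (odoSize i)) (hk : (k : ℕ) ≠ i ∨ i < 2) :
    odoW i k ≤ odoW i (k + 1) := by
  by_cases hi : (i + 1) % 2 = 0
  · rw [odoW_of_even hi, odoW_of_even hi]
  have hs := odoSize_of_odd hi
  have hlow : (2 : ℝ≥0∞)⁻¹ ^ (i + 1) / (i + 1) ≤ (1 - 2⁻¹ ^ (i + 1)) / (i + 1) := by
    have hq : (2 : ℝ≥0∞)⁻¹ ^ (i + 1) ≤ 2⁻¹ := pow_le_of_le_one (by simp) (by simp) (by simp)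
    gcongr
    exact hq.trans (ENNReal.inv_two_le_one_sub_of_le hq)
  have hk' := k.isLt
  rcases lt_or_ge (k : ℕ) (i + 1) with hlt | hge
  · rw [odoW_of_lt hi hlt]
    have hk1 := val_add_one_of_lt (k := k) (by omega)
    rcases lt_or_ge ((k : ℕ) + 1) (i + 1) with hlt' | hge'
    · rw [odoW_of_lt hi (hk1 ▸ hlt')]
    · obtain rfl : i = 0 := by omega
      rw [odoW_of_le hi (by omega)]
      simp [ENNReal.one_sub_inv_two]
  · rw [odoW_of_le hi hge]
    rcases eq_or_ne (k : ℕ) (odoSize i - 1) with hmax | hmax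
    · rw [add_one_eq_zero hmax, odoW_of_lt hi (by simp)]
      exact hlow
    · rw [odoW_of_le hi ((val_add_one_of_lt (k := k) (by omega)).symm ▸ by omega)]

lemma odoW_le_odoW_zero {i : ℕ} {a : Fin (odoSize i)} (ha : (a : ℕ) = odoSize i - 1) :
    odoW i a ≤ odoW i 0 := by
  have := odoW_le_odoW_add_one a (by unfold odoSize at ha; split at ha <;> omega)
  rwa [add_one_eq_zero ha] at this

lemma mul_one_sub_mul_inv_four_le {r : ℝ≥0∞} (hr : r ≤ 2⁻¹) :
    r * (1 - r * 4⁻¹) ≤ 8 * ((1 - r) * (r * 4⁻¹)) :=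
  calc r * (1 - r * 4⁻¹) ≤ r := mul_le_of_le_one_right' tsub_le_self
    _ = r * (2 * 2⁻¹) * (4 * 4⁻¹) := by
      rw [ENNReal.mul_inv_cancel (by norm_num) (by norm_num),
        ENNReal.mul_inv_cancel (by norm_num) (by norm_num), mul_one, mul_one]
    _ = 8 * (2⁻¹ * (r * 4⁻¹)) := by ring
    _ ≤ 8 * ((1 - r) * (r * 4⁻¹)) := by gcongr; exact ENNReal.inv_two_le_one_sub_of_le hr

lemma odoW_mul_odoW_le (c : ℕ) {a : Fin (odoSize c)} (ha : (a : ℕ) = odoSize c - 1)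
    {k : Fin (odoSize (c + 2))} (hk : (k : ℕ) = c + 2) :
    odoW c a * odoW (c + 2) k ≤ 8 * (odoW c 0 * odoW (c + 2) (k + 1)) := by
  by_cases hc : (c + 1) % 2 = 0
  · have hc2 : (c + 2 + 1) % 2 = 0 := by omega
    rw [odoW_of_even hc, odoW_of_even hc, odoW_of_even hc2, odoW_of_even hc2]
    exact le_mul_of_one_le_left' (by norm_num)
  have hc2 : ¬(c + 2 + 1) % 2 = 0 := by omega
  have hsc := odoSize_of_odd hc
  have hsc2 := odoSize_of_odd hc2
  have hk1 : ((k + 1 : Fin (odoSize (c + 2))) : ℕ) = c + 3 := by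
    rw [val_add_one_of_lt (by omega), hk]
  have hpow : (2 : ℝ≥0∞)⁻¹ ^ (c + 2 + 1) = 2⁻¹ ^ (c + 1) * 4⁻¹ := by
    rw [show c + 2 + 1 = (c + 1) + 2 by ring, pow_add]
    congr 1
    rw [← ENNReal.inv_pow]
    norm_num
  rw [odoW_of_le hc (by omega), odoW_of_lt hc2 (by omega), odoW_of_lt hc (by simp),
    odoW_of_le hc2 (by omega), hpow]
  set D₁ : ℝ≥0∞ := (c : ℝ≥0∞) + 1
  set D₂ : ℝ≥0∞ := ((c + 2 : ℕ) : ℝ≥0∞) + 1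
  set r : ℝ≥0∞ := 2⁻¹ ^ (c + 1)
  calc r / D₁ * ((1 - r * 4⁻¹) / D₂) = r * (1 - r * 4⁻¹) * (D₁⁻¹ * D₂⁻¹) := by
        simp only [div_eq_mul_inv]; ring
    _ ≤ 8 * ((1 - r) * (r * 4⁻¹)) * (D₁⁻¹ * D₂⁻¹) := by
        exact mul_le_mul_left (mul_one_sub_mul_inv_four_le (pow_le_of_le_one (by simp) (by simp) c.succ_ne_zero)) _
    _ = 8 * ((1 - r) / D₁ * (r * 4⁻¹ / D₂)) := by simp only [div_eq_mul_inv]; ring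

lemma prod_odoW_mul_le_of_carry {n : ℕ} {x : OdoX} (hx : ∀ j < n, (x j : ℕ) = odoSize j - 1)
    (k : Fin (odoSize n)) :
    (∏ j ∈ Finset.range n, odoW j (x j)) * odoW n k
      ≤ 8 * ((∏ j ∈ Finset.range n, odoW j (odoMap x j)) * odoW n (k + 1)) := by
  have hle : ∀ j < n, odoW j (x j) ≤ odoW j (odoMap x j) := fun j hj => by
    rw [odoMap_apply_eq_zero hx hj]; exact odoW_le_odoW_zero (hx j hj)
  by_cases hk : (k : ℕ) ≠ n ∨ n < 2
  · calc _ ≤ (∏ j ∈ Finset.range n, odoW j (odoMap x j)) * odoW n (k + 1) := by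
          gcongr with j hj
          · exact hle j (Finset.mem_range.mp hj)
          · exact odoW_le_odoW_add_one k hk
      _ ≤ _ := le_mul_of_one_le_left' (by norm_num)
  obtain ⟨c, rfl⟩ : ∃ c, n = c + 2 := ⟨n - 2, by omega⟩
  -- the weight lost at the incremented digit is recovered from the carried digit `c`
  have hpair := odoW_mul_odoW_le c (hx c (by omega)) (k := k) (by omega)
  rw [← odoMap_apply_eq_zero hx (by omega : c < c + 2)] at hpair
  simp only [Finset.prod_range_succ]
  calc _ = ((∏ j ∈ Finset.range c, odoW j (x j)) * odoW (c + 1) (x (c + 1))) *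
        (odoW c (x c) * odoW (c + 2) k) := by ring
    _ ≤ ((∏ j ∈ Finset.range c, odoW j (odoMap x j)) * odoW (c + 1) (odoMap x (c + 1))) *
        (8 * (odoW c (odoMap x c) * odoW (c + 2) (k + 1))) := by
      gcongr with j hj
      · exact hle j (by simp at hj; omega)
      · exact hle (c + 1) (by omega)
    _ = _ := by ring

theorem prod_odoW_le_mul_prod_odoW_odoMap (n : ℕ) (x : OdoX) :
    ∏ j ∈ Finset.range n, odoW j (x j) ≤ 8 * ∏ j ∈ Finset.range n, odoW j (odoMap x j) := by
  induction n with
  | zero => simp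
  | succ n ih =>
    rw [Finset.prod_range_succ, Finset.prod_range_succ]
    by_cases hx : ∀ j < n, (x j : ℕ) = odoSize j - 1
    · rw [odoMap_apply_of_forall hx]
      exact prod_odoW_mul_le_of_carry hx (x n)
    · rw [odoMap_apply_of_not_forall hx, ← mul_assoc]
      exact mul_le_mul_left ih _

lemma measurable_toPrefix (n : ℕ) : Measurable (toPrefix n) :=
  measurable_pi_lambda _ fun _ => measurable_pi_apply _

lemma measurableSet_preimage_toPrefix (n : ℕ) (S : Set (Prefix n)) :
    MeasurableSet (toPrefix n ⁻¹' S) :=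
  measurable_toPrefix n S.to_countable.measurableSet

lemma measurable_odoMap : Measurable odoMap := by
  refine measurable_pi_lambda _ fun i => ?_
  have h : (fun x => odoMap x i) =
      ((fun a : Prefix (i + 1) => a ⟨i, i.lt_succ_self⟩) ∘ prefixStep (i + 1)) ∘ toPrefix (i + 1) :=
    funext fun x => congrFun (semiconj_toPrefix (i + 1) x) ⟨i, i.lt_succ_self⟩
  rw [h]
  exact (measurable_of_countable _).comp (measurable_toPrefix _)

def cylinders : Set (Set OdoX) := {s | ∃ n S, toPrefix n ⁻¹' S = s}

lemma isSetAlgebra_cylinders : IsSetAlgebra cylinders where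
  empty_mem := ⟨0, ∅, rfl⟩
  compl_mem := by
    rintro - ⟨n, S, rfl⟩
    exact ⟨n, Sᶜ, rfl⟩
  union_mem := by
    rintro - - ⟨n, S, rfl⟩ ⟨m, S', rfl⟩
    let restrict {k : ℕ} (h : k ≤ max n m) (a : Prefix (max n m)) : Prefix k :=
      fun j => a (Fin.castLE h j)
    exact ⟨max n m, restrict (le_max_left n m) ⁻¹' S ∪ restrict (le_max_right n m) ⁻¹' S', rfl⟩

lemma generateFrom_cylinders :
    (inferInstance : MeasurableSpace OdoX) = MeasurableSpace.generateFrom cylinders := by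
  refine le_antisymm (iSup_le fun i => ?_) (MeasurableSpace.generateFrom_le ?_)
  · rw [← measurable_iff_comap_le]
    have h : Measurable[MeasurableSpace.generateFrom cylinders] (toPrefix (i + 1)) :=
      fun S _ => MeasurableSpace.measurableSet_generateFrom ⟨_, S, rfl⟩
    exact (measurable_of_countable (fun a : Prefix (i + 1) => a ⟨i, i.lt_succ_self⟩)).comp h
  · rintro - ⟨n, S, rfl⟩
    exact measurableSet_preimage_toPrefix n S

def IsOdometerMeasure (μ : Measure OdoX) : Prop :=
  ∀ (n : ℕ) (a : ∀ j : Fin n, Fin (odoSize j)),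
    μ {x : OdoX | ∀ j : Fin n, x j = a j} = ∏ j : Fin n, odoW j (a j)

variable {μ : Measure OdoX}

lemma IsOdometerMeasure.isProbabilityMeasure (hμ : IsOdometerMeasure μ) :
    IsProbabilityMeasure μ :=
  ⟨by simpa using hμ 0 fun j => j.elim0⟩

lemma IsOdometerMeasure.map_toPrefix_singleton (hμ : IsOdometerMeasure μ) {n : ℕ}
    (a : Prefix n) : μ.map (toPrefix n) {a} = ∏ j : Fin n, odoW j (a j) := by
  rw [Measure.map_apply (measurable_toPrefix n) (measurableSet_singleton a),
    ← setOf_forall_eq_eq_preimage_toPrefix, hμ]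

lemma IsOdometerMeasure.map_prefixStep_le (hμ : IsOdometerMeasure μ) (n : ℕ) :
    (μ.map (toPrefix n)).map (prefixStep n) ≤ (8 : ℝ≥0) • μ.map (toPrefix n) := by
  refine Measure.le_of_forall_measure_singleton_le fun a => ?_
  obtain ⟨x, rfl⟩ := ((prefixStep_bijective n).surjective.comp (toPrefix_surjective n)) a
  have hpre : prefixStep n ⁻¹' {prefixStep n (toPrefix n x)} = {toPrefix n x} := by
    rw [← Set.image_singleton, (prefixStep_bijective n).injective.preimage_image]
  rw [Measure.map_apply (measurable_of_countable _) (measurableSet_singleton _),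
    Function.comp_apply, hpre, Measure.smul_apply, ← semiconj_toPrefix, hμ.map_toPrefix_singleton,
    hμ.map_toPrefix_singleton, ENNReal.smul_def, smul_eq_mul]
  simpa [toPrefix, Fin.prod_univ_eq_prod_range (fun j => odoW j (x j)),
    Fin.prod_univ_eq_prod_range (fun j => odoW j (odoMap x j))]
    using prod_odoW_le_mul_prod_odoW_odoMap n x

lemma IsOdometerMeasure.map_odoMap_le (hμ : IsOdometerMeasure μ) :
    μ.map odoMap ≤ (8 : ℝ≥0) • μ := by
  have := hμ.isProbabilityMeasure
  refine Measure.le_of_forall_le_of_isSetAlgebra isSetAlgebra_cylinders generateFrom_cylinders ?_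
  rintro - ⟨n, S, rfl⟩
  have hmap : (μ.map odoMap).map (toPrefix n) ≤ ((8 : ℝ≥0) • μ).map (toPrefix n) := by
    rw [Measure.map_map (measurable_toPrefix n) measurable_odoMap, (semiconj_toPrefix n).comp_eq,
      ← Measure.map_map (measurable_of_countable _) (measurable_toPrefix n), Measure.map_smul]
    exact hμ.map_prefixStep_le n
  simpa only [Measure.map_apply (measurable_toPrefix n) S.to_countable.measurableSet] using hmap S

lemma IsOdometerMeasure.quasiMeasurePreserving_odoMap (hμ : IsOdometerMeasure μ) :
    Measure.QuasiMeasurePreserving odoMap μ μ :=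
  ⟨measurable_odoMap, (Measure.absolutelyContinuous_of_le hμ.map_odoMap_le).trans
    Measure.smul_absolutelyContinuous⟩

lemma IsOdometerMeasure.pow_base_apply_indicatorConstLp (hμ : IsOdometerMeasure μ)
    [IsFiniteMeasure μ] {p : ℝ≥0∞} [Fact (1 ≤ p)] {T : Lp ℝ p μ →L[ℝ] Lp ℝ p μ}
    (hT : ∀ φ : Lp ℝ p μ, T φ =ᵐ[μ] fun x => φ (odoMap x)) (n : ℕ) (S : Set (Prefix n))
    (c : ℝ) :
    (T ^ base n) (indicatorConstLp p (measurableSet_preimage_toPrefix n S) (measure_ne_top μ _) c)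
      = indicatorConstLp p (measurableSet_preimage_toPrefix n S) (measure_ne_top μ _) c := by
  rw [pow_apply_indicatorConstLp hμ.quasiMeasurePreserving_odoMap hT]
  simp only [preimage_iterate_base_odoMap]

end Odometer

/-- For the odometer `f` on `X = ∏ A_i` with the product measure `μ`
determined by the weights `odoW`, every basic cylinder `C = [a₁,…,a_n]` satisfies
`f^{−N}(C) = C` with `N = |A₁|⋯|A_n|`, its indicator is (represented by) a periodic point
of `T_f`, and `T_f` has a dense set of periodic points. -/
theorem stmt_19 (μ : Measure OdoX)
    (hμ : ∀ (n : ℕ) (a : ∀ j : Fin n, Fin (odoSize j)),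
      μ {x : OdoX | ∀ j : Fin n, x j = a j} = ∏ j : Fin n, odoW j (a j))
    (p : ℝ≥0∞) [Fact (1 ≤ p)] (hp : p ≠ ⊤)
    (T : Lp ℝ p μ →L[ℝ] Lp ℝ p μ)
    (hT : ∀ φ : Lp ℝ p μ, (T φ : OdoX → ℝ) =ᵐ[μ] fun x => (φ : OdoX → ℝ) (odoMap x)) :
    (∀ (n : ℕ) (a : ∀ j : Fin n, Fin (odoSize j)),
      odoMap^[∏ j : Fin n, odoSize j] ⁻¹' {x : OdoX | ∀ j : Fin n, x j = a j}
          = {x : OdoX | ∀ j : Fin n, x j = a j} ∧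
      ∃ ψ : Lp ℝ p μ,
        ((ψ : OdoX → ℝ) =ᵐ[μ]
          Set.indicator {x : OdoX | ∀ j : Fin n, x j = a j} fun _ => (1 : ℝ)) ∧
        1 ≤ (∏ j : Fin n, odoSize (j : ℕ)) ∧
        (T ^ (∏ j : Fin n, odoSize (j : ℕ))) ψ = ψ) ∧
    Dense {φ : Lp ℝ p μ | ∃ N : ℕ, 1 ≤ N ∧ (T ^ N) φ = φ} := by
  have := Odometer.IsOdometerMeasure.isProbabilityMeasure hμ
  have : Fact (p ≠ ∞) := ⟨hp⟩
  have hperiodic := Odometer.IsOdometerMeasure.pow_base_apply_indicatorConstLp hμ hT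
  refine ⟨fun n a => ?_, ?_⟩
  · rw [Fin.prod_univ_eq_prod_range odoSize n, Odometer.setOf_forall_eq_eq_preimage_toPrefix]
    exact ⟨Odometer.preimage_iterate_base_odoMap n {a}, _, indicatorConstLp_coeFn,
      Odometer.base_pos n, hperiodic n {a} 1⟩
  · refine dense_of_indicatorConstLp_mem (Measure.MeasureDense.of_generateFrom_isSetAlgebra_finite μ
      Odometer.isSetAlgebra_cylinders Odometer.generateFrom_cylinders) T.periodicPoints ?_
    rintro - ⟨n, S, rfl⟩ c
    exact ⟨Odometer.base n, Odometer.base_pos n, hperiodic n S c⟩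
end
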